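/- arXiv:1706.02074 — 6 statements merged into one kernel-verified Lean document; each statement's English description precedes it below -/
import Mathlib

section
/- Let κ_s(x) := det(γ̂'(x), γ̂''(x), ν(x)) / ‖γ̂'(x)‖³ (the singular curvature of the folded cuspidal edge φ along its singular curve y = 0). Then κ_s(0) = a''(0) and κ_s'(0) = 8·b₁(0)·b₀'(0)³ + a'''(0). -/
open Real Set

noncomputable def cross3 (a b : Fin 3 → ℝ) : Fin 3 → ℝ :=
  ![a 1 * b 2 - a 2 * b 1, a 2 * b 0 - a 0 * b 2, a 0 * b 1 - a 1 * b 0]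

noncomputable def det3 (a b c : Fin 3 → ℝ) : ℝ :=
  Matrix.det (Matrix.of ![a, b, c])

noncomputable def norm3 (a : Fin 3 → ℝ) : ℝ :=
  Real.sqrt (a 0 ^ 2 + a 1 ^ 2 + a 2 ^ 2)

noncomputable def dot3 (a b : Fin 3 → ℝ) : ℝ :=
  a 0 * b 0 + a 1 * b 1 + a 2 * b 2

/-!
Along `y = 0` the surface restricts to the curve `γ̂ = (x, a, c)` with `c = b₀²`, and
`φ_yy(x, 0) = (0, 1, m)` with `m = 4 b₀ b₁`; so `κ_s` is the singular curvature of `γ̂` against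
the normal field `w = γ̂' × (0, 1, m)`. At `x = 0` we have `γ̂' = e₁` and `w = e₃`, while
`γ̂'' ⊥ γ̂'` and `w' ⊥ w`; so both norms are stationary there and `κ_s'(0)` is the derivative
of `det(γ̂', γ̂'', w)` alone. By the product rule this is
`det(e₁, γ̂''', e₃) + det(e₁, γ̂'', w') = a'''(0) + c''(0) m'(0)`,
and `c''(0) = 2 b₀'(0)²`, `m'(0) = 4 b₀'(0) b₁(0)`.
-/

lemma det3_eq_dot3_cross3 (a b c : Fin 3 → ℝ) : det3 a b c = dot3 (cross3 a b) c := by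
  simp [det3, dot3, cross3, Matrix.det_fin_three]
  ring

lemma det3_smul_right (a b c : Fin 3 → ℝ) (r : ℝ) : det3 a b (r • c) = r * det3 a b c := by
  simp [det3, Matrix.det_fin_three]
  ring

lemma norm3_eq_sqrt_dot3 (a : Fin 3 → ℝ) : norm3 a = √(dot3 a a) := by
  simp [norm3, dot3, sq]

lemma dot3_self_pos {a : Fin 3 → ℝ} (ha : a ≠ 0) : 0 < dot3 a a := by
  contrapose! ha
  have h₀ := mul_self_nonneg (a 0)
  have h₁ := mul_self_nonneg (a 1)
  have h₂ := mul_self_nonneg (a 2)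
  funext i
  fin_cases i <;> simp [dot3] at ha ⊢ <;> nlinarith

lemma norm3_pos {a : Fin 3 → ℝ} (ha : a ≠ 0) : 0 < norm3 a := by
  rw [norm3_eq_sqrt_dot3]
  exact Real.sqrt_pos.2 (dot3_self_pos ha)

lemma hasDerivAt_vec3 {f₀ f₁ f₂ : ℝ → ℝ} {d₀ d₁ d₂ x : ℝ}
    (h₀ : HasDerivAt f₀ d₀ x) (h₁ : HasDerivAt f₁ d₁ x) (h₂ : HasDerivAt f₂ d₂ x) :
    HasDerivAt (fun t => ![f₀ t, f₁ t, f₂ t]) ![d₀, d₁, d₂] x := by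
  rw [hasDerivAt_pi]
  intro i
  fin_cases i <;> simpa

lemma contDiff_vec3 {n : WithTop ℕ∞} {f₀ f₁ f₂ : ℝ → ℝ} (h₀ : ContDiff ℝ n f₀)
    (h₁ : ContDiff ℝ n f₁) (h₂ : ContDiff ℝ n f₂) :
    ContDiff ℝ n (fun t => ![f₀ t, f₁ t, f₂ t]) := by
  rw [contDiff_pi]
  intro i
  fin_cases i <;> simpa

lemma iteratedDeriv_pi_apply {ι E : Type*} [Fintype ι] [NormedAddCommGroup E] [NormedSpace ℝ E]
    {n : ℕ} {F : ℝ → ι → E} {x : ℝ} (hF : ContDiffAt ℝ n F x) (i : ι) :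
    iteratedDeriv n F x i = iteratedDeriv n (fun t => F t i) x := by
  let p : (ι → E) →L[ℝ] E := ContinuousLinearMap.proj i
  simp only [iteratedDeriv_eq_iteratedFDeriv]
  rw [show (fun t => F t i) = p ∘ F from rfl, p.iteratedFDeriv_comp_left hF le_rfl]
  simp [p]

lemma iteratedDeriv_vec3 {n : ℕ} {f₀ f₁ f₂ : ℝ → ℝ} (h₀ : ContDiff ℝ n f₀)
    (h₁ : ContDiff ℝ n f₁) (h₂ : ContDiff ℝ n f₂) (x : ℝ) :
    iteratedDeriv n (fun t => ![f₀ t, f₁ t, f₂ t]) x =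
      ![iteratedDeriv n f₀ x, iteratedDeriv n f₁ x, iteratedDeriv n f₂ x] := by
  funext i
  rw [iteratedDeriv_pi_apply (contDiff_vec3 h₀ h₁ h₂).contDiffAt]
  fin_cases i <;> rfl

section Derivatives

variable {F G H : ℝ → Fin 3 → ℝ} {F' G' H' : Fin 3 → ℝ} {x : ℝ}

lemma hasDerivAt_dot3 (hF : HasDerivAt F F' x) (hG : HasDerivAt G G' x) :
    HasDerivAt (fun t => dot3 (F t) (G t)) (dot3 F' (G x) + dot3 (F x) G') x := by
  have hc := fun i => (hasDerivAt_pi.1 hF i).fun_mul (hasDerivAt_pi.1 hG i)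
  exact (((hc 0).fun_add (hc 1)).fun_add (hc 2)).congr_deriv (by simp only [dot3]; ring)

lemma hasDerivAt_cross3 (hF : HasDerivAt F F' x) (hG : HasDerivAt G G' x) :
    HasDerivAt (fun t => cross3 (F t) (G t)) (cross3 F' (G x) + cross3 (F x) G') x := by
  have hc := fun i j => (hasDerivAt_pi.1 hF i).fun_mul (hasDerivAt_pi.1 hG j)
  refine (hasDerivAt_vec3 ((hc 1 2).fun_sub (hc 2 1)) ((hc 2 0).fun_sub (hc 0 2))
    ((hc 0 1).fun_sub (hc 1 0))).congr_deriv ?_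
  simp only [cross3, Matrix.cons_add_cons, Matrix.empty_add_empty]
  ring_nf

lemma hasDerivAt_det3 (hF : HasDerivAt F F' x) (hG : HasDerivAt G G' x)
    (hH : HasDerivAt H H' x) :
    HasDerivAt (fun t => det3 (F t) (G t) (H t))
      (det3 F' (G x) (H x) + det3 (F x) G' (H x) + det3 (F x) (G x) H') x := by
  simp only [det3_eq_dot3_cross3]
  convert hasDerivAt_dot3 (hasDerivAt_cross3 hF hG) hH using 1
  simp [dot3, cross3]
  ring

lemma hasDerivAt_norm3 (hF : HasDerivAt F F' x) (hx : F x ≠ 0) :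
    HasDerivAt (fun t => norm3 (F t)) (dot3 (F x) F' / norm3 (F x)) x := by
  simp only [norm3_eq_sqrt_dot3]
  convert (hasDerivAt_dot3 hF hF).sqrt (dot3_self_pos hx).ne' using 1
  simp [dot3]
  ring

end Derivatives

noncomputable def singularCurvature (T K w : Fin 3 → ℝ) : ℝ :=
  det3 T K ((norm3 w)⁻¹ • w) / norm3 T ^ 3

lemma singularCurvature_eq (T K w : Fin 3 → ℝ) :
    singularCurvature T K w = det3 T K w / (norm3 w * norm3 T ^ 3) := by
  rw [singularCurvature, det3_smul_right]
  ring

lemma hasDerivAt_singularCurvature {T K w : ℝ → Fin 3 → ℝ} {T' K' w' : Fin 3 → ℝ} {x : ℝ}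
    (hT : HasDerivAt T T' x) (hK : HasDerivAt K K' x) (hw : HasDerivAt w w' x)
    (hTx : T x ≠ 0) (hwx : w x ≠ 0) (hTT' : dot3 (T x) T' = 0) (hww' : dot3 (w x) w' = 0) :
    HasDerivAt (fun t => singularCurvature (T t) (K t) (w t))
      ((det3 T' (K x) (w x) + det3 (T x) K' (w x) + det3 (T x) (K x) w') /
        (norm3 (w x) * norm3 (T x) ^ 3)) x := by
  have hN : HasDerivAt (fun t => norm3 (w t) * norm3 (T t) ^ 3) 0 x := by
    refine ((hasDerivAt_norm3 hw hwx).fun_mul ((hasDerivAt_norm3 hT hTx).fun_pow 3)).congr_deriv ?_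
    simp [hTT', hww']
  have hNx : norm3 (w x) * norm3 (T x) ^ 3 ≠ 0 := by
    have := norm3_pos hTx
    have := norm3_pos hwx
    positivity
  simp only [singularCurvature_eq]
  refine ((hasDerivAt_det3 hT hK hw).fun_div hN hNx).congr_deriv ?_
  rw [mul_zero, sub_zero, sq, mul_div_mul_right _ _ hNx]

lemma hasDerivAt_iteratedDeriv {E : Type*} [NormedAddCommGroup E] [NormedSpace ℝ E]
    {F : ℝ → E} {n : ℕ} (hF : ContDiff ℝ (n + 1) F) (x : ℝ) :
    HasDerivAt (iteratedDeriv n F) (iteratedDeriv (n + 1) F x) x := by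
  rw [iteratedDeriv_succ]
  exact (hF.differentiable_iteratedDeriv' n x).hasDerivAt

lemma iteratedDeriv_two_sq {f : ℝ → ℝ} (hf : ContDiff ℝ 2 f) (x : ℝ) :
    iteratedDeriv 2 (fun t => f t ^ 2) x = 2 * deriv f x ^ 2 + 2 * f x * iteratedDeriv 2 f x := by
  simp only [sq]
  rw [iteratedDeriv_fun_mul hf.contDiffAt hf.contDiffAt]
  simp [Finset.sum_range_succ, iteratedDeriv_one]
  ring

lemma deriv_sq_mul_zero {R : ℝ → ℝ} (hR : DifferentiableAt ℝ R 0) :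
    deriv (fun y => y ^ 2 * R y) 0 = 0 := by
  simp [hR]

lemma iteratedDeriv_two_sq_mul_zero {R : ℝ → ℝ} (hR : ContDiff ℝ 2 R) :
    iteratedDeriv 2 (fun y => y ^ 2 * R y) 0 = 2 * R 0 := by
  rw [iteratedDeriv_fun_mul (f := fun y => y ^ 2) (contDiff_id.pow 2).contDiffAt hR.contDiffAt]
  simp [Finset.sum_range_succ]

lemma iteratedDeriv_two_foldedCuspidalEdge_zero {g : ℝ → ℝ} (hg : ContDiff ℝ 2 g)
    (x α β₀ β₁ β₂ : ℝ) :
    iteratedDeriv 2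
        (fun y => ![x, α + y ^ 2 / 2, (β₀ + β₁ * y ^ 2 + β₂ * y ^ 3 + g y * y ^ 4) ^ 2]) 0 =
      ![0, 1, 4 * β₀ * β₁] := by
  set R : ℝ → ℝ := fun y => β₁ + β₂ * y + g y * y ^ 2
  have hR : ContDiff ℝ 2 R := by fun_prop
  have hB : (fun y => (β₀ + β₁ * y ^ 2 + β₂ * y ^ 3 + g y * y ^ 4) ^ 2) =
      fun y => (β₀ + y ^ 2 * R y) ^ 2 := by
    funext y; ring
  have hB₂ : ContDiff ℝ 2 (fun y => β₀ + y ^ 2 * R y) := by fun_prop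
  rw [iteratedDeriv_vec3 contDiff_const (by fun_prop) (hB ▸ hB₂.pow 2 :), hB,
    iteratedDeriv_two_sq hB₂, deriv_const_add, deriv_sq_mul_zero (hR.differentiable two_ne_zero 0),
    iteratedDeriv_const_add two_pos, iteratedDeriv_two_sq_mul_zero hR]
  simp [R, iteratedDeriv_const_add, iteratedDeriv_const, iteratedDeriv_div_const]
  ring

def graphCurve (a c : ℝ → ℝ) : ℝ → Fin 3 → ℝ := fun t => ![t, a t, c t]

noncomputable def graphSingularCurvature (a c m : ℝ → ℝ) (x : ℝ) : ℝ :=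
  singularCurvature (deriv (graphCurve a c) x) (iteratedDeriv 2 (graphCurve a c) x)
    (cross3 (deriv (graphCurve a c) x) ![0, 1, m x])

section GraphCurve

variable {a c m : ℝ → ℝ}

lemma deriv_graphCurve {x : ℝ} (ha : DifferentiableAt ℝ a x) (hc : DifferentiableAt ℝ c x) :
    deriv (graphCurve a c) x = ![1, deriv a x, deriv c x] :=
  (hasDerivAt_vec3 (hasDerivAt_id x) ha.hasDerivAt hc.hasDerivAt).deriv

lemma iteratedDeriv_graphCurve {n : ℕ} (hn : 2 ≤ n) (ha : ContDiff ℝ n a) (hc : ContDiff ℝ n c)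
    (x : ℝ) :
    iteratedDeriv n (graphCurve a c) x = ![0, iteratedDeriv n a x, iteratedDeriv n c x] := by
  unfold graphCurve
  rw [iteratedDeriv_vec3 contDiff_fun_id ha hc, iteratedDeriv_fun_id]
  simp only [show n ≠ 0 by omega, show n ≠ 1 by omega, if_false]

lemma graphSingularCurvature_zero (ha : ContDiff ℝ 2 a) (hc : ContDiff ℝ 2 c)
    (ha' : deriv a 0 = 0) (hc' : deriv c 0 = 0) (hm0 : m 0 = 0) :
    graphSingularCurvature a c m 0 = iteratedDeriv 2 a 0 := by
  rw [graphSingularCurvature, deriv_graphCurve (ha.differentiable (by simp) 0)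
    (hc.differentiable (by simp) 0), iteratedDeriv_graphCurve le_rfl ha hc]
  simp [ha', hc', hm0, singularCurvature, cross3, det3, norm3, Matrix.det_fin_three]

lemma hasDerivAt_graphSingularCurvature_zero {m' : ℝ} (ha : ContDiff ℝ 3 a) (hc : ContDiff ℝ 3 c)
    (ha' : deriv a 0 = 0) (hc' : deriv c 0 = 0) (hm0 : m 0 = 0) (hm : HasDerivAt m m' 0) :
    HasDerivAt (graphSingularCurvature a c m)
      (iteratedDeriv 3 a 0 + iteratedDeriv 2 c 0 * m') 0 := by
  have hγ : ContDiff ℝ 3 (graphCurve a c) := contDiff_vec3 contDiff_id ha hc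
  have hT : HasDerivAt (deriv (graphCurve a c)) (iteratedDeriv 2 (graphCurve a c) 0) 0 := by
    simpa [iteratedDeriv_one] using hasDerivAt_iteratedDeriv (n := 1) (hγ.of_le (by norm_num)) 0
  have hw := hasDerivAt_cross3 hT (hasDerivAt_vec3 (hasDerivAt_const 0 0) (hasDerivAt_const 0 1) hm)
  have hT0 : deriv (graphCurve a c) 0 = ![1, 0, 0] := by
    rw [deriv_graphCurve (ha.differentiable (by simp) 0) (hc.differentiable (by simp) 0), ha', hc']
  have hK0 := iteratedDeriv_graphCurve le_rfl (ha.of_le (by norm_num)) (hc.of_le (by norm_num)) 0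
  have hK'0 := iteratedDeriv_graphCurve (by norm_num) ha hc 0
  have hw0 : cross3 (deriv (graphCurve a c) 0) ![0, 1, m 0] = ![0, 0, 1] := by
    simp [hT0, hm0, cross3]
  have hκ := hasDerivAt_singularCurvature hT (hasDerivAt_iteratedDeriv hγ 0) hw
    (by rw [hT0]; intro h; simpa using congrFun h 0)
    (by rw [hw0]; intro h; simpa using congrFun h 2)
    (by rw [hT0, hK0]; simp [dot3]) (by rw [hw0, hK0, hT0]; simp [dot3, cross3])
  refine hκ.congr_deriv ?_
  rw [hw0, hT0, hK0, hK'0]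
  simp [hm0, det3, norm3, cross3, Matrix.det_fin_three]

end GraphCurve

theorem stmt0_general (a b₀ b₁ b₂ : ℝ → ℝ) (b₃ : ℝ → ℝ → ℝ)
    (ha : ContDiff ℝ (⊤ : ℕ∞) a) (hb₀ : ContDiff ℝ (⊤ : ℕ∞) b₀)
    (hb₁ : ContDiff ℝ (⊤ : ℕ∞) b₁)
    (hb₃ : ContDiff ℝ (⊤ : ℕ∞) (Function.uncurry b₃))
    (ha0' : deriv a 0 = 0) (hb₀0 : b₀ 0 = 0)
    (φ : ℝ → ℝ → Fin 3 → ℝ)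
    (hφ : ∀ x y, φ x y =
      ![x, a x + y ^ 2 / 2,
        (b₀ x + b₁ x * y ^ 2 + b₂ x * y ^ 3 + b₃ x y * y ^ 4) ^ 2])
    (γ : ℝ → Fin 3 → ℝ) (hγ : ∀ x, γ x = φ x 0)
    (w : ℝ → Fin 3 → ℝ)
    (hw : ∀ x, w x = cross3 (deriv (fun t => φ t 0) x) (iteratedDeriv 2 (φ x) 0))
    (ν : ℝ → Fin 3 → ℝ) (hν : ∀ x, ν x = (norm3 (w x))⁻¹ • w x)
    (κs : ℝ → ℝ)
    (hκs : ∀ x, κs x =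
      det3 (deriv γ x) (iteratedDeriv 2 γ x) (ν x) / norm3 (deriv γ x) ^ 3) :
    κs 0 = iteratedDeriv 2 a 0 ∧
      deriv κs 0 = 8 * b₁ 0 * deriv b₀ 0 ^ 3 + iteratedDeriv 3 a 0 := by
  have hb₀' : DifferentiableAt ℝ b₀ 0 := hb₀.differentiable (by simp) 0
  have hγ_eq : γ = graphCurve a (fun t => b₀ t ^ 2) :=
    funext fun t => by simp [hγ, hφ, graphCurve]
  have hκ_eq : κs = graphSingularCurvature a (fun t => b₀ t ^ 2) (fun x => 4 * b₀ x * b₁ x) := by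
    funext x
    have hb₃x : ContDiff ℝ 2 (b₃ x) :=
      contDiff_infty.1 (hb₃.comp (contDiff_const.prodMk contDiff_id)) 2
    rw [hκs, hν, hw, show φ x = _ from funext (hφ x),
      iteratedDeriv_two_foldedCuspidalEdge_zero hb₃x, ← funext hγ, hγ_eq]
    rfl
  have hc : ContDiff ℝ (⊤ : ℕ∞) (fun t => b₀ t ^ 2) := hb₀.pow 2
  have hc' : deriv (fun t => b₀ t ^ 2) 0 = 0 := by simp [hb₀', hb₀0]
  have hc'' : iteratedDeriv 2 (fun t => b₀ t ^ 2) 0 = 2 * deriv b₀ 0 ^ 2 := by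
    simp [iteratedDeriv_two_sq (contDiff_infty.1 hb₀ 2), hb₀0]
  have hm0 : 4 * b₀ 0 * b₁ 0 = 0 := by simp [hb₀0]
  have hm : HasDerivAt (fun x => 4 * b₀ x * b₁ x) (4 * deriv b₀ 0 * b₁ 0) 0 :=
    ((hb₀'.hasDerivAt.const_mul 4).fun_mul (hb₁.differentiable (by simp) 0).hasDerivAt).congr_deriv
      (by simp [hb₀0])
  constructor
  · rw [hκ_eq]
    exact graphSingularCurvature_zero (contDiff_infty.1 ha 2) (contDiff_infty.1 hc 2) ha0' hc' hm0
  · rw [hκ_eq, (hasDerivAt_graphSingularCurvature_zero (contDiff_infty.1 ha 3)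
      (contDiff_infty.1 hc 3) ha0' hc' hm0 hm).deriv, hc'']
    ring

/-- For the folded cuspidal edge
`φ(x,y) = (x, a(x) + y²/2, (b₀(x) + b₁(x)y² + b₂(x)y³ + b₃(x,y)y⁴)²)`, the singular
curvature `κ_s(x) = det(γ̂'(x), γ̂''(x), ν(x)) / ‖γ̂'(x)‖³` along the singular curve
`y = 0` satisfies `κ_s(0) = a''(0)` and `κ_s'(0) = 8 b₁(0) b₀'(0)³ + a'''(0)`. -/
theorem stmt0 (a b₀ b₁ b₂ : ℝ → ℝ) (b₃ : ℝ → ℝ → ℝ)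
    (ha : ContDiff ℝ (⊤ : ℕ∞) a) (hb₀ : ContDiff ℝ (⊤ : ℕ∞) b₀)
    (hb₁ : ContDiff ℝ (⊤ : ℕ∞) b₁) (hb₂ : ContDiff ℝ (⊤ : ℕ∞) b₂)
    (hb₃ : ContDiff ℝ (⊤ : ℕ∞) (Function.uncurry b₃))
    (ha0 : a 0 = 0) (ha0' : deriv a 0 = 0) (hb₀0 : b₀ 0 = 0)
    (φ : ℝ → ℝ → Fin 3 → ℝ)
    (hφ : ∀ x y, φ x y =
      ![x, a x + y ^ 2 / 2,
        (b₀ x + b₁ x * y ^ 2 + b₂ x * y ^ 3 + b₃ x y * y ^ 4) ^ 2])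
    (γ : ℝ → Fin 3 → ℝ) (hγ : ∀ x, γ x = φ x 0)
    (w : ℝ → Fin 3 → ℝ)
    (hw : ∀ x, w x = cross3 (deriv (fun t => φ t 0) x) (iteratedDeriv 2 (φ x) 0))
    (ν : ℝ → Fin 3 → ℝ) (hν : ∀ x, ν x = (norm3 (w x))⁻¹ • w x)
    (κs : ℝ → ℝ)
    (hκs : ∀ x, κs x =
      det3 (deriv γ x) (iteratedDeriv 2 γ x) (ν x) / norm3 (deriv γ x) ^ 3) :
    κs 0 = iteratedDeriv 2 a 0 ∧
      deriv κs 0 = 8 * b₁ 0 * deriv b₀ 0 ^ 3 + iteratedDeriv 3 a 0 :=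
  stmt0_general a b₀ b₁ b₂ b₃ ha hb₀ hb₁ hb₃ ha0' hb₀0 φ hφ γ hγ w hw ν hν κs hκs
end

section
/- Let κ_t(x) := det(φ_x, φ_yy, φ_xyy)/‖φ_x × φ_yy‖² − det(φ_x, φ_yy, φ_xyy)·⟨φ_x, φ_yy⟩/(‖φ_x‖²·‖φ_x × φ_yy‖²), all partial derivatives evaluated at (x,0) (the cusp-directional torsion of the folded cuspidal edge φ along its singular curve y = 0). Then κ_t(0) = 4·b₁(0)·b₀'(0). -/
/-! Along the singular curve the height function factors as `b₀ + y² h` with `h(x, 0) = b₁(x)`,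
so `φ = φ(x, 0) + y² (0, 1/2, 2 b₀ h + y² h²)` and `φ_yy(x, 0) = (0, 1, 4 b₀ b₁)`.
Since `a'(0) = b₀(0) = 0`, at the origin `φ_x = e₁`, `φ_yy = e₂` and
`φ_xyy = 4 (b₀ b₁)'(0) e₃ = 4 b₁(0) b₀'(0) e₃`; for this orthonormal frame the torsion is just
the last coordinate of `φ_xyy`. -/

open Real Set

theorem iteratedDeriv_two_sq_smul_zero {E : Type*} [NormedAddCommGroup E] [NormedSpace ℝ E]
    {G : ℝ → E} (hG : ContDiff ℝ 2 G) :
    iteratedDeriv 2 (fun y => y ^ 2 • G y) 0 = (2 : ℝ) • G 0 := by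
  have hG1 : Differentiable ℝ G := hG.differentiable (by norm_num)
  have hG2 : Differentiable ℝ (deriv G) :=
    ((contDiff_succ_iff_deriv (n := 1)).mp hG).2.2.differentiable one_ne_zero
  have hderiv :
      deriv (fun y => y ^ 2 • G y) = fun y => (2 * y) • G y + y ^ 2 • deriv G y := by
    funext y
    simpa [add_comm] using ((hasDerivAt_pow 2 y).fun_smul (hG1 y).hasDerivAt).deriv
  rw [iteratedDeriv_succ, iteratedDeriv_one, hderiv]
  have h := (((hasDerivAt_id 0).const_mul 2).fun_smul (hG1 0).hasDerivAt).fun_add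
    ((hasDerivAt_pow 2 (0 : ℝ)).fun_smul (hG2 0).hasDerivAt)
  simpa using h.deriv

theorem HasDerivAt.vec3 {f g h : ℝ → ℝ} {f' g' h' x : ℝ} (hf : HasDerivAt f f' x)
    (hg : HasDerivAt g g' x) (hh : HasDerivAt h h' x) :
    HasDerivAt (fun t => ![f t, g t, h t]) ![f', g', h'] x :=
  hasDerivAt_pi.2 fun i => by fin_cases i <;> assumption

theorem iteratedDeriv_two_foldedCuspidalEdge_slice (c d c₀ c₁ c₂ : ℝ) {g : ℝ → ℝ}
    (hg : ContDiff ℝ 2 g) :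
    iteratedDeriv 2
        (fun y => ![c, d + y ^ 2 / 2, (c₀ + c₁ * y ^ 2 + c₂ * y ^ 3 + g y * y ^ 4) ^ 2]) 0 =
      ![0, 1, 4 * c₀ * c₁] := by
  obtain ⟨h, hh, hh0, hB⟩ : ∃ h : ℝ → ℝ, ContDiff ℝ 2 h ∧ h 0 = c₁ ∧
      ∀ y, c₀ + c₁ * y ^ 2 + c₂ * y ^ 3 + g y * y ^ 4 = c₀ + y ^ 2 * h y :=
    ⟨fun y => c₁ + c₂ * y + g y * y ^ 2, by fun_prop, by simp, fun y => by ring⟩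
  have hsplit : (fun y => ![c, d + y ^ 2 / 2, (c₀ + y ^ 2 * h y) ^ 2]) =
      fun y => ![c, d, c₀ ^ 2] + y ^ 2 • ![0, 1 / 2, 2 * c₀ * h y + y ^ 2 * h y ^ 2] := by
    funext y
    simp only [Matrix.smul_cons, Matrix.smul_empty, smul_eq_mul, Matrix.cons_add_cons,
      Matrix.empty_add_empty]
    ring_nf
  have hsmooth : ContDiff ℝ 2 fun y => ![0, 1 / 2, 2 * c₀ * h y + y ^ 2 * h y ^ 2] :=
    contDiff_pi' fun i => by fin_cases i <;> dsimp <;> fun_prop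
  simp only [hB]
  rw [hsplit, iteratedDeriv_const_add two_pos, iteratedDeriv_two_sq_smul_zero hsmooth, hh0]
  simp only [Matrix.smul_cons, Matrix.smul_empty, smul_eq_mul]
  ring_nf

theorem stmt2_general (a b₀ b₁ b₂ : ℝ → ℝ) (b₃ : ℝ → ℝ → ℝ)
    (ha : ContDiff ℝ (⊤ : ℕ∞) a) (hb₀ : ContDiff ℝ (⊤ : ℕ∞) b₀)
    (hb₁ : ContDiff ℝ (⊤ : ℕ∞) b₁)
    (hb₃ : ContDiff ℝ (⊤ : ℕ∞) (Function.uncurry b₃))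
    (ha0' : deriv a 0 = 0) (hb₀0 : b₀ 0 = 0)
    (φ : ℝ → ℝ → Fin 3 → ℝ)
    (hφ : ∀ x y, φ x y =
      ![x, a x + y ^ 2 / 2,
        (b₀ x + b₁ x * y ^ 2 + b₂ x * y ^ 3 + b₃ x y * y ^ 4) ^ 2])
    (φX φYY φXYY : ℝ → Fin 3 → ℝ)
    (hφX : ∀ x, φX x = deriv (fun t => φ t 0) x)
    (hφYY : ∀ x, φYY x = iteratedDeriv 2 (φ x) 0)
    (hφXYY : ∀ x, φXYY x = deriv (fun t => iteratedDeriv 2 (φ t) 0) x)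
    (κt : ℝ → ℝ)
    (hκt : ∀ x, κt x =
      det3 (φX x) (φYY x) (φXYY x) / norm3 (cross3 (φX x) (φYY x)) ^ 2 -
        det3 (φX x) (φYY x) (φXYY x) * dot3 (φX x) (φYY x) /
          (norm3 (φX x) ^ 2 * norm3 (cross3 (φX x) (φYY x)) ^ 2)) :
    κt 0 = 4 * b₁ 0 * deriv b₀ 0 := by
  have hφyy : ∀ x, iteratedDeriv 2 (φ x) 0 = ![0, 1, 4 * b₀ x * b₁ x] := fun x => by
    rw [show φ x = _ from funext (hφ x)]
    exact iteratedDeriv_two_foldedCuspidalEdge_slice _ _ _ _ _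
      ((hb₃.comp (contDiff_const.prodMk contDiff_id)).of_le (WithTop.coe_le_coe.2 le_top))
  have hda := (ha.differentiable (by simp) 0).hasDerivAt
  have hdb₀ := (hb₀.differentiable (by simp) 0).hasDerivAt
  have hdb₁ := (hb₁.differentiable (by simp) 0).hasDerivAt
  have hX : φX 0 = ![1, 0, 0] := by
    have h := (hasDerivAt_id 0).vec3 hda (hdb₀.pow 2)
    rw [hφX, show (fun t => φ t 0) = fun t => ![t, a t, b₀ t ^ 2] from
      funext fun t => by simp [hφ]]
    simpa [ha0', hb₀0] using h.deriv
  have hYY : φYY 0 = ![0, 1, 0] := by rw [hφYY, hφyy, hb₀0]; simp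
  have hXYY : φXYY 0 = ![0, 0, 4 * b₁ 0 * deriv b₀ 0] := by
    have h := (hasDerivAt_const 0 (0 : ℝ)).vec3 (hasDerivAt_const 0 1)
      ((hdb₀.const_mul 4).mul hdb₁)
    simp only [hφXYY, hφyy, hb₀0] at h ⊢
    simpa [mul_right_comm] using h.deriv
  rw [hκt, hX, hYY, hXYY]
  simp [det3, cross3, norm3, dot3, Matrix.det_fin_three]

/-- For the folded cuspidal edge, the cusp-directional torsion
`κ_t(x) = det(φ_x, φ_yy, φ_xyy)/‖φ_x × φ_yy‖² −
  det(φ_x, φ_yy, φ_xyy)⟨φ_x, φ_yy⟩/(‖φ_x‖²‖φ_x × φ_yy‖²)` (partials at `(x,0)`)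
satisfies `κ_t(0) = 4 b₁(0) b₀'(0)`. -/
theorem stmt2 (a b₀ b₁ b₂ : ℝ → ℝ) (b₃ : ℝ → ℝ → ℝ)
    (ha : ContDiff ℝ (⊤ : ℕ∞) a) (hb₀ : ContDiff ℝ (⊤ : ℕ∞) b₀)
    (hb₁ : ContDiff ℝ (⊤ : ℕ∞) b₁) (hb₂ : ContDiff ℝ (⊤ : ℕ∞) b₂)
    (hb₃ : ContDiff ℝ (⊤ : ℕ∞) (Function.uncurry b₃))
    (ha0 : a 0 = 0) (ha0' : deriv a 0 = 0) (hb₀0 : b₀ 0 = 0)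
    (φ : ℝ → ℝ → Fin 3 → ℝ)
    (hφ : ∀ x y, φ x y =
      ![x, a x + y ^ 2 / 2,
        (b₀ x + b₁ x * y ^ 2 + b₂ x * y ^ 3 + b₃ x y * y ^ 4) ^ 2])
    (φX φYY φXYY : ℝ → Fin 3 → ℝ)
    (hφX : ∀ x, φX x = deriv (fun t => φ t 0) x)
    (hφYY : ∀ x, φYY x = iteratedDeriv 2 (φ x) 0)
    (hφXYY : ∀ x, φXYY x = deriv (fun t => iteratedDeriv 2 (φ t) 0) x)
    (κt : ℝ → ℝ)
    (hκt : ∀ x, κt x =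
      det3 (φX x) (φYY x) (φXYY x) / norm3 (cross3 (φX x) (φYY x)) ^ 2 -
        det3 (φX x) (φYY x) (φXYY x) * dot3 (φX x) (φYY x) /
          (norm3 (φX x) ^ 2 * norm3 (cross3 (φX x) (φYY x)) ^ 2)) :
    κt 0 = 4 * b₁ 0 * deriv b₀ 0 :=
  stmt2_general a b₀ b₁ b₂ b₃ ha hb₀ hb₁ hb₃ ha0' hb₀0 φ hφ φX φYY φXYY hφX hφYY hφXYY κt hκt
end

section
/- Let κ_c(x) := ‖φ_x‖^{3/2}·det(φ_x, φ_yy, φ_yyy)/‖φ_x × φ_yy‖^{5/2}, all partial derivatives evaluated at (x,0) (the cuspidal curvature of the folded cuspidal edge φ along its singular curve y = 0). Then for every x ∈ ℝ, κ_c(x) = 12·b₀(x)·b₂(x)·A(x)^{3/4}/B(x)^{5/4}, where A(x) = 1 + a'(x)² + 4b₀(x)²b₀'(x)² and B(x) = 1 + 16b₀(x)²b₁(x)² + 4b₀(x)²(b₀'(x) − 2b₁(x)a'(x))². In particular κ_c(0) = 0 and κ_c'(0) = 12·b₂(0)·b₀'(0). -/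
open Real Set

/-!
Along `y = 0` every component of `φ x` has the form `c₀ + c₂ y² + c₃ y³ + y⁴ H(y)` with `H`
smooth, so `φ_yy = (0, 1, 4 b₀ b₁)` and `φ_yyy = (0, 0, 12 b₀ b₂)` are read off this cubic jet
(Leibniz' rule kills every derivative of order `< 4` of `y⁴ H(y)` at `0`), while
`φ_x = (1, a', 2 b₀ b₀')`. The frame `(φ_x, φ_yy, φ_yyy)` is triangular, so the determinant is
`12 b₀ b₂` and the two norms are `√A` and `√B`. Finally `κ_c = b₀ · g` with `g` continuous,
`b₀ 0 = 0` and `A 0 = B 0 = 1`, so `κ_c' 0 = b₀' 0 · g 0 = 12 b₂ 0 b₀' 0`.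
-/

section IteratedDeriv

variable {𝕜 F : Type*} [NontriviallyNormedField 𝕜] [NormedAddCommGroup F] [NormedSpace 𝕜 F]

theorem iteratedDeriv_pow_smul_of_lt {n k : ℕ} (hk : k < n) {H : 𝕜 → F}
    (hH : ContDiffAt 𝕜 k H 0) : iteratedDeriv k (fun y => y ^ n • H y) 0 = 0 := by
  have hpow : ContDiffAt 𝕜 k (· ^ n : 𝕜 → 𝕜) 0 := by fun_prop
  have leibniz := iteratedDerivWithin_smul (s := univ) (mem_univ 0) uniqueDiffOn_univ
    hpow.contDiffWithinAt hH.contDiffWithinAt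
  simp only [iteratedDerivWithin_univ] at leibniz
  rw [show (fun y => y ^ n • H y) = (· ^ n : 𝕜 → 𝕜) • H from rfl, leibniz]
  refine Finset.sum_eq_zero fun i hi => ?_
  have hin : i ≠ n := by have := Finset.mem_range.mp hi; omega
  simp only [iteratedDeriv_fun_pow_zero, if_neg hin, Nat.cast_zero, zero_smul, smul_zero]

theorem iteratedDeriv_add_pow_smul_of_lt {n k : ℕ} (hk : k < n) {p H : 𝕜 → F}
    (hp : ContDiffAt 𝕜 k p 0) (hH : ContDiffAt 𝕜 k H 0) :
    iteratedDeriv k (fun y => p y + y ^ n • H y) 0 = iteratedDeriv k p 0 := by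
  rw [iteratedDeriv_fun_add hp (by fun_prop), iteratedDeriv_pow_smul_of_lt hk hH, add_zero]

variable {f H : 𝕜 → F} {c₀ c₂ c₃ : F}

theorem iteratedDeriv_two_eq_of_cubic_jet (hH : ContDiffAt 𝕜 2 H 0)
    (hf : ∀ y, f y = c₀ + y ^ 2 • c₂ + y ^ 3 • c₃ + y ^ 4 • H y) :
    iteratedDeriv 2 f 0 = (2 : 𝕜) • c₂ := by
  rw [funext hf, iteratedDeriv_add_pow_smul_of_lt (by norm_num) (by fun_prop) hH,
    iteratedDeriv_fun_add (by fun_prop) (by fun_prop),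
    iteratedDeriv_const_add (n := 2) (by norm_num),
    iteratedDeriv_smul_const (by fun_prop), iteratedDeriv_smul_const (by fun_prop)]
  simp

theorem iteratedDeriv_three_eq_of_cubic_jet (hH : ContDiffAt 𝕜 3 H 0)
    (hf : ∀ y, f y = c₀ + y ^ 2 • c₂ + y ^ 3 • c₃ + y ^ 4 • H y) :
    iteratedDeriv 3 f 0 = (6 : 𝕜) • c₃ := by
  rw [funext hf, iteratedDeriv_add_pow_smul_of_lt (by norm_num) (by fun_prop) hH,
    iteratedDeriv_fun_add (by fun_prop) (by fun_prop),
    iteratedDeriv_const_add (n := 3) (by norm_num),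
    iteratedDeriv_smul_const (by fun_prop), iteratedDeriv_smul_const (by fun_prop)]
  simp

end IteratedDeriv

theorem HasDerivAt.mul_continuousAt_of_eq_zero {f g : ℝ → ℝ} {f' x : ℝ} (hf : HasDerivAt f f' x)
    (hfx : f x = 0) (hg : ContinuousAt g x) : HasDerivAt (fun y => f y * g y) (f' * g x) x := by
  rw [hasDerivAt_iff_tendsto_slope] at hf ⊢
  refine (hf.mul (hg.tendsto.mono_left nhdsWithin_le_nhds)).congr fun y => ?_
  simp only [slope_def_field, hfx]
  ring

noncomputable def cuspidalCurvatureOfFrame (φX φYY φYYY : Fin 3 → ℝ) : ℝ :=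
  norm3 φX ^ ((3 : ℝ) / 2) * det3 φX φYY φYYY / norm3 (cross3 φX φYY) ^ ((5 : ℝ) / 2)

noncomputable def cuspidalCurvature (φ : ℝ → ℝ → Fin 3 → ℝ) (x : ℝ) : ℝ :=
  cuspidalCurvatureOfFrame (deriv (fun t => φ t 0) x) (iteratedDeriv 2 (φ x) 0)
    (iteratedDeriv 3 (φ x) 0)

theorem cuspidalCurvatureOfFrame_triangular (p q r s : ℝ) :
    cuspidalCurvatureOfFrame ![1, p, q] ![0, 1, r] ![0, 0, s] =
      s * (1 + p ^ 2 + q ^ 2) ^ ((3 : ℝ) / 4) / (1 + r ^ 2 + (q - p * r) ^ 2) ^ ((5 : ℝ) / 4) := by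
  have hdet : det3 ![1, p, q] ![0, 1, r] ![0, 0, s] = s := by
    simp [det3, Matrix.det_fin_three]
  have hu : norm3 ![1, p, q] = √(1 + p ^ 2 + q ^ 2) := by simp [norm3]
  have huv : norm3 (cross3 ![1, p, q] ![0, 1, r]) = √(1 + r ^ 2 + (q - p * r) ^ 2) := by
    simp [norm3, cross3]
    ring_nf
  rw [cuspidalCurvatureOfFrame, hdet, hu, huv, ← rpow_div_two_eq_sqrt _ (by positivity),
    ← rpow_div_two_eq_sqrt _ (by positivity)]
  norm_num
  ring

noncomputable def foldedCuspidalEdge (a b₀ b₁ b₂ : ℝ → ℝ) (b₃ : ℝ → ℝ → ℝ) (x y : ℝ) :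
    Fin 3 → ℝ :=
  ![x, a x + y ^ 2 / 2, (b₀ x + b₁ x * y ^ 2 + b₂ x * y ^ 3 + b₃ x y * y ^ 4) ^ 2]

section FoldedCuspidalEdge

variable {a b₀ b₁ b₂ : ℝ → ℝ} {b₃ : ℝ → ℝ → ℝ}

theorem foldedCuspidalEdge_eq_cubic_jet (x y : ℝ) :
    foldedCuspidalEdge a b₀ b₁ b₂ b₃ x y =
      ![x, a x, b₀ x ^ 2] + y ^ 2 • ![0, 1 / 2, 2 * b₀ x * b₁ x] +
        y ^ 3 • ![0, 0, 2 * b₀ x * b₂ x] +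
        y ^ 4 • ![0, 0, (b₁ x + b₂ x * y + b₃ x y * y ^ 2) ^ 2 + 2 * b₀ x * b₃ x y] := by
  ext i
  fin_cases i <;> simp [foldedCuspidalEdge] <;> ring

theorem contDiffAt_cubic_jet_remainder {x : ℝ} (hb₃ : ContDiffAt ℝ 3 (b₃ x) 0) :
    ContDiffAt ℝ 3 (fun y =>
      ![0, 0, (b₁ x + b₂ x * y + b₃ x y * y ^ 2) ^ 2 + 2 * b₀ x * b₃ x y]) 0 := by
  refine contDiffAt_pi.2 fun i => ?_
  fin_cases i <;> simp <;> fun_prop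

theorem iteratedDeriv_two_foldedCuspidalEdge {x : ℝ} (hb₃ : ContDiffAt ℝ 3 (b₃ x) 0) :
    iteratedDeriv 2 (foldedCuspidalEdge a b₀ b₁ b₂ b₃ x) 0 = ![0, 1, 4 * b₀ x * b₁ x] := by
  rw [iteratedDeriv_two_eq_of_cubic_jet ((contDiffAt_cubic_jet_remainder hb₃).of_le (by norm_num))
    (foldedCuspidalEdge_eq_cubic_jet x)]
  ext i
  fin_cases i <;> simp
  ring

theorem iteratedDeriv_three_foldedCuspidalEdge {x : ℝ} (hb₃ : ContDiffAt ℝ 3 (b₃ x) 0) :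
    iteratedDeriv 3 (foldedCuspidalEdge a b₀ b₁ b₂ b₃ x) 0 = ![0, 0, 12 * b₀ x * b₂ x] := by
  rw [iteratedDeriv_three_eq_of_cubic_jet (contDiffAt_cubic_jet_remainder hb₃)
    (foldedCuspidalEdge_eq_cubic_jet x)]
  ext i
  fin_cases i <;> simp
  ring

theorem hasDerivAt_foldedCuspidalEdge_zero {x : ℝ} (ha : DifferentiableAt ℝ a x)
    (hb₀ : DifferentiableAt ℝ b₀ x) :
    HasDerivAt (fun t => foldedCuspidalEdge a b₀ b₁ b₂ b₃ t 0)
      ![1, deriv a x, 2 * b₀ x * deriv b₀ x] x := by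
  refine hasDerivAt_pi.2 fun i => ?_
  fin_cases i
  · simpa [foldedCuspidalEdge] using hasDerivAt_id' x
  · simpa [foldedCuspidalEdge] using ha.hasDerivAt
  · simpa [foldedCuspidalEdge, mul_comm] using hb₀.hasDerivAt.fun_pow 2

theorem cuspidalCurvature_foldedCuspidalEdge {x : ℝ} (ha : DifferentiableAt ℝ a x)
    (hb₀ : DifferentiableAt ℝ b₀ x) (hb₃ : ContDiffAt ℝ 3 (b₃ x) 0) :
    cuspidalCurvature (foldedCuspidalEdge a b₀ b₁ b₂ b₃) x =
      12 * b₀ x * b₂ x * (1 + deriv a x ^ 2 + 4 * b₀ x ^ 2 * deriv b₀ x ^ 2) ^ ((3 : ℝ) / 4) /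
        (1 + 16 * b₀ x ^ 2 * b₁ x ^ 2 +
          4 * b₀ x ^ 2 * (deriv b₀ x - 2 * b₁ x * deriv a x) ^ 2) ^ ((5 : ℝ) / 4) := by
  rw [cuspidalCurvature, (hasDerivAt_foldedCuspidalEdge_zero ha hb₀).deriv,
    iteratedDeriv_two_foldedCuspidalEdge hb₃, iteratedDeriv_three_foldedCuspidalEdge hb₃,
    cuspidalCurvatureOfFrame_triangular]
  congr 3 <;> ring

theorem hasDerivAt_cuspidalCurvature_foldedCuspidalEdge_zero (ha : ContDiff ℝ 1 a)
    (hb₀ : ContDiff ℝ 1 b₀) (hb₁ : ContinuousAt b₁ 0) (hb₂ : ContinuousAt b₂ 0)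
    (hb₃ : ∀ x, ContDiffAt ℝ 3 (b₃ x) 0) (ha0' : deriv a 0 = 0) (hb₀0 : b₀ 0 = 0) :
    HasDerivAt (cuspidalCurvature (foldedCuspidalEdge a b₀ b₁ b₂ b₃))
      (12 * b₂ 0 * deriv b₀ 0) 0 := by
  set A := fun x => 1 + deriv a x ^ 2 + 4 * b₀ x ^ 2 * deriv b₀ x ^ 2
  set B := fun x => 1 + 16 * b₀ x ^ 2 * b₁ x ^ 2 +
    4 * b₀ x ^ 2 * (deriv b₀ x - 2 * b₁ x * deriv a x) ^ 2
  have hA0 : A 0 = 1 := by simp [A, ha0', hb₀0]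
  have hB0 : B 0 = 1 := by simp [B, hb₀0]
  have hκ : cuspidalCurvature (foldedCuspidalEdge a b₀ b₁ b₂ b₃) =
      fun x => b₀ x * (12 * b₂ x * A x ^ ((3 : ℝ) / 4) / B x ^ ((5 : ℝ) / 4)) := by
    funext x
    rw [cuspidalCurvature_foldedCuspidalEdge (ha.differentiable one_ne_zero x)
      (hb₀.differentiable one_ne_zero x) (hb₃ x)]
    ring
  have hg : ContinuousAt (fun x => 12 * b₂ x * A x ^ ((3 : ℝ) / 4) / B x ^ ((5 : ℝ) / 4)) 0 := by
    have hda := (ha.continuous_deriv le_rfl).continuousAt (x := 0)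
    have hdb₀ := (hb₀.continuous_deriv le_rfl).continuousAt (x := 0)
    have hb₀c := hb₀.continuous.continuousAt (x := 0)
    refine ContinuousAt.div (by fun_prop (disch := norm_num)) (by fun_prop (disch := norm_num)) ?_
    simp [hB0]
  rw [hκ]
  convert (hb₀.differentiable one_ne_zero 0).hasDerivAt.mul_continuousAt_of_eq_zero hb₀0 hg
    using 1
  simp [hA0, hB0]
  ring

end FoldedCuspidalEdge

theorem stmt3_general (a b₀ b₁ b₂ : ℝ → ℝ) (b₃ : ℝ → ℝ → ℝ)
    (ha : ContDiff ℝ (⊤ : ℕ∞) a) (hb₀ : ContDiff ℝ (⊤ : ℕ∞) b₀)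
    (hb₁ : ContDiff ℝ (⊤ : ℕ∞) b₁) (hb₂ : ContDiff ℝ (⊤ : ℕ∞) b₂)
    (hb₃ : ContDiff ℝ (⊤ : ℕ∞) (Function.uncurry b₃))
    (ha0' : deriv a 0 = 0) (hb₀0 : b₀ 0 = 0)
    (φ : ℝ → ℝ → Fin 3 → ℝ)
    (hφ : ∀ x y, φ x y =
      ![x, a x + y ^ 2 / 2,
        (b₀ x + b₁ x * y ^ 2 + b₂ x * y ^ 3 + b₃ x y * y ^ 4) ^ 2])
    (φX φYY φYYY : ℝ → Fin 3 → ℝ)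
    (hφX : ∀ x, φX x = deriv (fun t => φ t 0) x)
    (hφYY : ∀ x, φYY x = iteratedDeriv 2 (φ x) 0)
    (hφYYY : ∀ x, φYYY x = iteratedDeriv 3 (φ x) 0)
    (κc : ℝ → ℝ)
    (hκc : ∀ x, κc x =
      norm3 (φX x) ^ ((3 : ℝ) / 2) * det3 (φX x) (φYY x) (φYYY x) /
        norm3 (cross3 (φX x) (φYY x)) ^ ((5 : ℝ) / 2)) :
    (∀ x, κc x =
      12 * b₀ x * b₂ x * (1 + deriv a x ^ 2 + 4 * b₀ x ^ 2 * deriv b₀ x ^ 2) ^ ((3 : ℝ) / 4) /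
        (1 + 16 * b₀ x ^ 2 * b₁ x ^ 2 +
          4 * b₀ x ^ 2 * (deriv b₀ x - 2 * b₁ x * deriv a x) ^ 2) ^ ((5 : ℝ) / 4)) ∧
    κc 0 = 0 ∧ deriv κc 0 = 12 * b₂ 0 * deriv b₀ 0 := by
  have hb₃x (x : ℝ) : ContDiffAt ℝ 3 (b₃ x) 0 :=
    (hb₃.comp (contDiff_const.prodMk contDiff_id)).contDiffAt.of_le (WithTop.coe_le_coe.2 le_top)
  have hκ : κc = cuspidalCurvature (foldedCuspidalEdge a b₀ b₁ b₂ b₃) := by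
    funext x
    rw [hκc, hφX, hφYY, hφYYY, funext₂ hφ]
    rfl
  have formula (x : ℝ) := hκ ▸ cuspidalCurvature_foldedCuspidalEdge (b₁ := b₁) (b₂ := b₂)
    (ha.differentiable (by simp) x) (hb₀.differentiable (by simp) x) (hb₃x x)
  refine ⟨formula, by simp [formula, hb₀0], ?_⟩
  rw [hκ]
  exact (hasDerivAt_cuspidalCurvature_foldedCuspidalEdge_zero (ha.of_le (by simp))
    (hb₀.of_le (by simp)) hb₁.continuous.continuousAt hb₂.continuous.continuousAt hb₃x ha0'
    hb₀0).deriv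

/-- For the folded cuspidal edge, the cuspidal curvature
`κ_c(x) = ‖φ_x‖^{3/2} det(φ_x, φ_yy, φ_yyy)/‖φ_x × φ_yy‖^{5/2}` (partials at `(x,0)`)
satisfies `κ_c(x) = 12 b₀(x) b₂(x) A(x)^{3/4}/B(x)^{5/4}` for every `x`; in particular
`κ_c(0) = 0` and `κ_c'(0) = 12 b₂(0) b₀'(0)`. -/
theorem stmt3 (a b₀ b₁ b₂ : ℝ → ℝ) (b₃ : ℝ → ℝ → ℝ)
    (ha : ContDiff ℝ (⊤ : ℕ∞) a) (hb₀ : ContDiff ℝ (⊤ : ℕ∞) b₀)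
    (hb₁ : ContDiff ℝ (⊤ : ℕ∞) b₁) (hb₂ : ContDiff ℝ (⊤ : ℕ∞) b₂)
    (hb₃ : ContDiff ℝ (⊤ : ℕ∞) (Function.uncurry b₃))
    (ha0 : a 0 = 0) (ha0' : deriv a 0 = 0) (hb₀0 : b₀ 0 = 0)
    (φ : ℝ → ℝ → Fin 3 → ℝ)
    (hφ : ∀ x y, φ x y =
      ![x, a x + y ^ 2 / 2,
        (b₀ x + b₁ x * y ^ 2 + b₂ x * y ^ 3 + b₃ x y * y ^ 4) ^ 2])
    (φX φYY φYYY : ℝ → Fin 3 → ℝ)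
    (hφX : ∀ x, φX x = deriv (fun t => φ t 0) x)
    (hφYY : ∀ x, φYY x = iteratedDeriv 2 (φ x) 0)
    (hφYYY : ∀ x, φYYY x = iteratedDeriv 3 (φ x) 0)
    (κc : ℝ → ℝ)
    (hκc : ∀ x, κc x =
      norm3 (φX x) ^ ((3 : ℝ) / 2) * det3 (φX x) (φYY x) (φYYY x) /
        norm3 (cross3 (φX x) (φYY x)) ^ ((5 : ℝ) / 2)) :
    (∀ x, κc x =
      12 * b₀ x * b₂ x * (1 + deriv a x ^ 2 + 4 * b₀ x ^ 2 * deriv b₀ x ^ 2) ^ ((3 : ℝ) / 4) /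
        (1 + 16 * b₀ x ^ 2 * b₁ x ^ 2 +
          4 * b₀ x ^ 2 * (deriv b₀ x - 2 * b₁ x * deriv a x) ^ 2) ^ ((5 : ℝ) / 4)) ∧
    κc 0 = 0 ∧ deriv κc 0 = 12 * b₂ 0 * deriv b₀ 0 :=
  stmt3_general a b₀ b₁ b₂ b₃ ha hb₀ hb₁ hb₂ hb₃ ha0' hb₀0 φ hφ φX φYY φYYY hφX hφYY hφYYY κc hκc
end

section
/- For the folded cuspidal edge φ one has φ_yyy(0,0) = (0,0,0), and the secondary cuspidal curvature κ_c^r := ‖φ_x‖^{5/2}·det(φ_x, φ_yy, 3·φ_yyyyy)/‖φ_x × φ_yy‖^{7/2}, with all partial derivatives evaluated at (0,0), equals 720·b₁(0)·b₂(0). -/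
/-! Since `b₀(0) = 0`, the third coordinate of `φ(0, y)` is `y⁴ h(y)²` with
`h(y) = b₁(0) + b₂(0) y + b₃(0, y) y²`. By the Leibniz rule its derivatives of order `< 4`
vanish at `0`, and its fifth derivative there is `5 · 4! · (h²)'(0) = 240 b₁(0) b₂(0)`.
As `φ_x = e₁` and `φ_yy = e₂` at the origin, the curvature reduces to
`3 · (φ_yyyyy)₃ = 720 b₁(0) b₂(0)`. -/

open Real Set

theorem iteratedDeriv_pow_mul_apply_zero {𝕜 : Type*} [NontriviallyNormedField 𝕜]
    {g : 𝕜 → 𝕜} {n : ℕ} (m : ℕ) (hg : ContDiffAt 𝕜 n g 0) :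
    iteratedDeriv n (fun y => y ^ m * g y) 0 =
      if m ≤ n then n.choose m * m.factorial * iteratedDeriv (n - m) g 0 else 0 := by
  rw [iteratedDeriv_fun_mul (by fun_prop) hg]
  simp only [iteratedDeriv_fun_pow_zero, Nat.cast_ite, Nat.cast_zero, mul_ite, ite_mul,
    mul_zero, zero_mul]
  rw [Finset.sum_ite_eq']
  simp

section Profile

variable (A B : ℝ) {c : ℝ → ℝ}

theorem sq_profile_eq_pow_four_mul :
    (fun y => (A * y ^ 2 + B * y ^ 3 + c y * y ^ 4) ^ 2) =
      fun y => y ^ 4 * (A + B * y + c y * y ^ 2) ^ 2 := by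
  funext y
  ring

theorem iteratedDeriv_sq_profile_of_lt {n : ℕ} (hn : n < 4) (hc : ContDiffAt ℝ n c 0) :
    iteratedDeriv n (fun y => (A * y ^ 2 + B * y ^ 3 + c y * y ^ 4) ^ 2) 0 = 0 := by
  rw [sq_profile_eq_pow_four_mul, iteratedDeriv_pow_mul_apply_zero 4 (by fun_prop),
    if_neg (by omega)]

theorem iteratedDeriv_five_sq_profile (hc : ContDiffAt ℝ 5 c 0) :
    iteratedDeriv 5 (fun y => (A * y ^ 2 + B * y ^ 3 + c y * y ^ 4) ^ 2) 0 = 240 * A * B := by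
  have hlin : HasDerivAt (fun y => A + B * y + c y * y ^ 2) B 0 := by
    refine ((((hasDerivAt_id' (0 : ℝ)).const_mul B).const_add A).add
      ((hc.differentiableAt (by norm_num)).hasDerivAt.mul (hasDerivAt_pow 2 0))).congr_deriv ?_
    simp
  have hsq : HasDerivAt (fun y => (A + B * y + c y * y ^ 2) ^ 2) (2 * A * B) 0 :=
    (hlin.pow 2).congr_deriv (by simp [mul_assoc])
  rw [sq_profile_eq_pow_four_mul, iteratedDeriv_pow_mul_apply_zero 4 (by fun_prop),
    if_pos (by norm_num), iteratedDeriv_one, hsq.deriv]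
  norm_num [Nat.choose, Nat.factorial]
  ring

end Profile

theorem hasDerivAt_x_section {a b : ℝ → ℝ} (ha : DifferentiableAt ℝ a 0)
    (hb : DifferentiableAt ℝ b 0) (ha0' : deriv a 0 = 0) (hb0 : b 0 = 0) :
    HasDerivAt (fun t => ![t, a t, b t ^ 2]) ![1, 0, 0] 0 := by
  rw [hasDerivAt_pi]
  intro i
  fin_cases i
  · simpa using hasDerivAt_id' (0 : ℝ)
  · simpa [ha0'] using ha.hasDerivAt
  · exact (hb.hasDerivAt.pow 2).congr_deriv (by simp [hb0])

theorem iteratedDeriv_y_section (α : ℝ) {ψ : ℝ → ℝ} {n : ℕ} (hn : 0 < n)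
    (hψ : ContDiffAt ℝ n ψ 0) :
    iteratedDeriv n (fun y => ![0, α + y ^ 2 / 2, ψ y]) 0 =
      ![0, if n = 2 then 1 else 0, iteratedDeriv n ψ 0] := by
  have hsplit : (fun y => ![0, α + y ^ 2 / 2, ψ y]) =
      fun y => (α + y ^ 2 / 2) • ![0, 1, 0] + ψ y • ![0, 0, 1] := by
    funext y
    ext i
    fin_cases i <;> simp
  rw [hsplit, iteratedDeriv_fun_add (by fun_prop) (by fun_prop),
    iteratedDeriv_smul_const (by fun_prop), iteratedDeriv_smul_const hψ,
    iteratedDeriv_const_add hn, iteratedDeriv_div_const, iteratedDeriv_fun_pow_zero]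
  ext i
  by_cases h2 : n = 2 <;> fin_cases i <;> simp [h2]

noncomputable def secondaryCuspidalCurvature (φX φYY φYYYYY : Fin 3 → ℝ) : ℝ :=
  norm3 φX ^ ((5 : ℝ) / 2) * det3 φX φYY ((3 : ℝ) • φYYYYY) /
    norm3 (cross3 φX φYY) ^ ((7 : ℝ) / 2)

theorem secondaryCuspidalCurvature_standard_frame (v : Fin 3 → ℝ) :
    secondaryCuspidalCurvature ![1, 0, 0] ![0, 1, 0] v = 3 * v 2 := by
  have hcross : cross3 ![1, 0, 0] ![0, 1, 0] = ![0, 0, 1] := by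
    ext i
    fin_cases i <;> simp [cross3]
  simp [secondaryCuspidalCurvature, hcross, norm3, det3, Matrix.det_fin_three]

theorem stmt5_general (a b₀ b₁ b₂ : ℝ → ℝ) (b₃ : ℝ → ℝ → ℝ)
    (ha : ContDiff ℝ (⊤ : ℕ∞) a) (hb₀ : ContDiff ℝ (⊤ : ℕ∞) b₀)
    (hb₃ : ContDiff ℝ (⊤ : ℕ∞) (Function.uncurry b₃))
    (ha0' : deriv a 0 = 0) (hb₀0 : b₀ 0 = 0)
    (φ : ℝ → ℝ → Fin 3 → ℝ)
    (hφ : ∀ x y, φ x y =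
      ![x, a x + y ^ 2 / 2,
        (b₀ x + b₁ x * y ^ 2 + b₂ x * y ^ 3 + b₃ x y * y ^ 4) ^ 2])
    (φX φYY φYYYYY : Fin 3 → ℝ)
    (hφX : φX = deriv (fun t => φ t 0) 0)
    (hφYY : φYY = iteratedDeriv 2 (φ 0) 0)
    (hφYYYYY : φYYYYY = iteratedDeriv 5 (φ 0) 0) :
    iteratedDeriv 3 (φ 0) 0 = 0 ∧
      norm3 φX ^ ((5 : ℝ) / 2) * det3 φX φYY ((3 : ℝ) • φYYYYY) /
        norm3 (cross3 φX φYY) ^ ((7 : ℝ) / 2) = 720 * b₁ 0 * b₂ 0 := by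
  have hc : ∀ n : ℕ, ContDiffAt ℝ n (b₃ 0) 0 := fun n =>
    (hb₃.comp (contDiff_const.prodMk contDiff_id)).contDiffAt.of_le (by exact_mod_cast le_top)
  have hy : ∀ n : ℕ, 0 < n → iteratedDeriv n (φ 0) 0 = ![0, if n = 2 then 1 else 0,
      iteratedDeriv n (fun y => (b₁ 0 * y ^ 2 + b₂ 0 * y ^ 3 + b₃ 0 y * y ^ 4) ^ 2) 0] := by
    intro n hn
    have hsection : φ 0 = fun y =>
        ![0, a 0 + y ^ 2 / 2, (b₁ 0 * y ^ 2 + b₂ 0 * y ^ 3 + b₃ 0 y * y ^ 4) ^ 2] :=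
      funext fun y => by rw [hφ, hb₀0, zero_add]
    rw [hsection, iteratedDeriv_y_section _ hn (by fun_prop (disch := exact hc n))]
  have hX : φX = ![1, 0, 0] := by
    have hsection : (fun t => φ t 0) = fun t => ![t, a t, b₀ t ^ 2] :=
      funext fun t => by simp [hφ]
    rw [hφX, hsection]
    exact (hasDerivAt_x_section (ha.differentiable (by simp) 0)
      (hb₀.differentiable (by simp) 0) ha0' hb₀0).deriv
  have hYY : φYY = ![0, 1, 0] := by
    rw [hφYY, hy 2 (by norm_num), iteratedDeriv_sq_profile_of_lt _ _ (by norm_num) (hc 2)]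
    simp
  have hY5 : φYYYYY = ![0, 0, 240 * b₁ 0 * b₂ 0] := by
    rw [hφYYYYY, hy 5 (by norm_num), iteratedDeriv_five_sq_profile _ _ (hc 5)]
    simp
  refine ⟨?_, ?_⟩
  · rw [hy 3 (by norm_num), iteratedDeriv_sq_profile_of_lt _ _ (by norm_num) (hc 3)]
    simp
  · rw [hX, hYY, hY5]
    refine (secondaryCuspidalCurvature_standard_frame _).trans ?_
    simp only [Matrix.cons_val]
    ring

/-- For the folded cuspidal edge one has `φ_yyy(0,0) = 0`, and the
secondary cuspidal curvature
`κ_c^r = ‖φ_x‖^{5/2} det(φ_x, φ_yy, 3 φ_yyyyy)/‖φ_x × φ_yy‖^{7/2}` (all partials at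
`(0,0)`) equals `720 b₁(0) b₂(0)`. -/
theorem stmt5 (a b₀ b₁ b₂ : ℝ → ℝ) (b₃ : ℝ → ℝ → ℝ)
    (ha : ContDiff ℝ (⊤ : ℕ∞) a) (hb₀ : ContDiff ℝ (⊤ : ℕ∞) b₀)
    (hb₁ : ContDiff ℝ (⊤ : ℕ∞) b₁) (hb₂ : ContDiff ℝ (⊤ : ℕ∞) b₂)
    (hb₃ : ContDiff ℝ (⊤ : ℕ∞) (Function.uncurry b₃))
    (ha0 : a 0 = 0) (ha0' : deriv a 0 = 0) (hb₀0 : b₀ 0 = 0)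
    (φ : ℝ → ℝ → Fin 3 → ℝ)
    (hφ : ∀ x y, φ x y =
      ![x, a x + y ^ 2 / 2,
        (b₀ x + b₁ x * y ^ 2 + b₂ x * y ^ 3 + b₃ x y * y ^ 4) ^ 2])
    (φX φYY φYYYYY : Fin 3 → ℝ)
    (hφX : φX = deriv (fun t => φ t 0) 0)
    (hφYY : φYY = iteratedDeriv 2 (φ 0) 0)
    (hφYYYYY : φYYYYY = iteratedDeriv 5 (φ 0) 0) :
    iteratedDeriv 3 (φ 0) 0 = 0 ∧
      norm3 φX ^ ((5 : ℝ) / 2) * det3 φX φYY ((3 : ℝ) • φYYYYY) /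
        norm3 (cross3 φX φYY) ^ ((7 : ℝ) / 2) = 720 * b₁ 0 * b₂ 0 :=
  stmt5_general a b₀ b₁ b₂ b₃ ha hb₀ hb₃ ha0' hb₀0 φ hφ φX φYY φYYYYY hφX hφYY hφYYYYY
end

section
/- Assume b₀'(0) ≠ 0. Then there exist ε > 0 and a smooth function d : (−ε, ε) → ℝ with d(0) = 0 such that b₀(d(y)) + b₁(d(y))·y² + ½(b₃(d(y), y) + b₃(d(y), −y))·y⁴ = 0 for all |y| < ε (equivalently, φ(d(y), y) = φ(d(y), −y) for all |y| < ε, so y ↦ (d(y), y) parametrises the double point curve of the folded cuspidal edge φ). Moreover any such d satisfies d'(0) = 0, d''(0) = −2b₁(0)/b₀'(0), and d⁽⁴⁾(0) = −(12/b₀'(0)³)·(2b₃(0,0)b₀'(0)² + b₁(0)(b₁(0)b₀''(0) − 2b₀'(0)b₁'(0))). -/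
open Real Set

/-!
The curve exists by the implicit function theorem applied to
`G (y, x) = b₀ x + b₁ x y² + ½ (b₃ (x, y) + b₃ (x, -y)) y⁴`, since `∂ₓG (0, 0) = b₀'(0) ≠ 0`.
Its jet at `0` is read off by differentiating `G (y, d y) = 0` one, two and four times at `y = 0`:
the factors `y²` and `y⁴` only contribute through the Leibniz rule, and once `d'(0) = 0` is known,
Faà di Bruno's formula for `b₀ ∘ d` collapses to `b₀' d⁗ + 3 b₀'' (d'')²` in order four.
-/

open Filter Topology Finset

section ImplicitFunction

theorem ContinuousLinearMap.isInvertible_of_apply_one_ne_zero {𝕜 : Type*}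
    [NontriviallyNormedField 𝕜] {f : 𝕜 →L[𝕜] 𝕜} (hf : f 1 ≠ 0) : f.IsInvertible :=
  ⟨.unitsEquivAut 𝕜 (.mk0 _ hf), by ext; simp⟩

theorem HasFDerivAt.deriv_prodMk_right {𝕜 : Type*} [NontriviallyNormedField 𝕜]
    {G : 𝕜 × 𝕜 → 𝕜} {G' : 𝕜 × 𝕜 →L[𝕜] 𝕜} {u : 𝕜 × 𝕜} (hG : HasFDerivAt G G' u) :
    deriv (fun x => G (u.1, x)) u.2 = G' (0, 1) :=
  (hG.comp_hasDerivAt u.2 ((hasDerivAt_const u.2 u.1).prodMk (hasDerivAt_id u.2))).deriv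

variable {𝕜 : Type*} [RCLike 𝕜] {n : WithTop ℕ∞} {G : 𝕜 × 𝕜 → 𝕜} {u : 𝕜 × 𝕜}

theorem ContDiffAt.tendsto_prodMk_implicitFunction (hG : ContDiffAt 𝕜 n G u) (hn : n ≠ 0)
    (hu : (fderiv 𝕜 G u ∘L .inr 𝕜 𝕜 𝕜).IsInvertible) :
    Tendsto (fun y => (y, hG.implicitFunction hn hu y)) (𝓝 u.1) (𝓝 u) := by
  simpa [hG.implicitFunction_apply_self hn hu] using
    (continuousAt_id.prodMk (hG.contDiffAt_implicitFunction hn hu).continuousAt).tendsto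

theorem ContDiff.eventually_isInvertible_fderiv_comp_inr (hG : ContDiff 𝕜 n G) (hn : n ≠ 0)
    (hGu : deriv (fun x => G (u.1, x)) u.2 ≠ 0) :
    ∀ᶠ v in 𝓝 u, (fderiv 𝕜 G v ∘L .inr 𝕜 𝕜 𝕜).IsInvertible := by
  have hcont : Continuous fun v => fderiv 𝕜 G v (0, 1) :=
    (hG.continuous_fderiv hn).clm_apply continuous_const
  rw [(hG.differentiable hn).differentiableAt.hasFDerivAt.deriv_prodMk_right] at hGu
  filter_upwards [hcont.continuousAt.eventually_ne hGu] with v hv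
  exact ContinuousLinearMap.isInvertible_of_apply_one_ne_zero (by simpa using hv)

/-- Smoothness of the implicit function at the base point does not spread to a neighbourhood when
`n = ∞`; instead, near the base point it agrees with the implicit function based at each nearby
point of the level set, which is smooth there. -/
theorem ContDiff.eventually_contDiffAt_implicitFunction (hG : ContDiff 𝕜 n G) (hn : n ≠ 0)
    (hu : (fderiv 𝕜 G u ∘L .inr 𝕜 𝕜 𝕜).IsInvertible)
    (hinv : ∀ᶠ v in 𝓝 u, (fderiv 𝕜 G v ∘L .inr 𝕜 𝕜 𝕜).IsInvertible) :
    ∀ᶠ y in 𝓝 u.1, ContDiffAt 𝕜 n (hG.contDiffAt.implicitFunction hn hu) y := by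
  have hψ := hG.contDiffAt.tendsto_prodMk_implicitFunction hn hu
  filter_upwards [hψ.eventually hinv,
    hψ.eventually (hG.contDiffAt.eventually_apply_eq_iff_implicitFunction hn hu).eventually_nhds,
    hG.contDiffAt.eventually_apply_implicitFunction hn hu] with y hpinv hpuniq hpeq
  have hGp := hG.contDiffAt (x := (y, hG.contDiffAt.implicitFunction hn hu y))
  refine (hGp.contDiffAt_implicitFunction hn hpinv).congr_of_eventuallyEq ?_
  filter_upwards [(hGp.tendsto_prodMk_implicitFunction hn hpinv).eventually hpuniq,
    hGp.eventually_apply_implicitFunction hn hpinv] with x hxuniq hxeq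
  exact hxuniq.mp (hxeq.trans hpeq)

theorem ContDiff.exists_contDiffOn_ball_implicitFunction (hG : ContDiff 𝕜 n G) (hn : n ≠ 0)
    (hGu : deriv (fun x => G (u.1, x)) u.2 ≠ 0) :
    ∃ ε > 0, ∃ d : 𝕜 → 𝕜, ContDiffOn 𝕜 n d (Metric.ball u.1 ε) ∧ d u.1 = u.2 ∧
      ∀ y ∈ Metric.ball u.1 ε, G (y, d y) = G u := by
  have hinv := hG.eventually_isInvertible_fderiv_comp_inr hn hGu
  obtain ⟨ε, hε, hball⟩ := Metric.eventually_nhds_iff_ball.mp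
    ((hG.eventually_contDiffAt_implicitFunction hn hinv.self_of_nhds hinv).and
      (hG.contDiffAt.eventually_apply_implicitFunction hn hinv.self_of_nhds))
  exact ⟨ε, hε, _, fun y hy => (hball y hy).1.contDiffWithinAt,
    hG.contDiffAt.implicitFunction_apply_self hn _, fun y hy => (hball y hy).2⟩

end ImplicitFunction

section IteratedDeriv

variable {𝕜 : Type*} [NontriviallyNormedField 𝕜]

theorem iteratedDeriv_mul_pow_zero {f : 𝕜 → 𝕜} {k : ℕ} (hf : ContDiffAt 𝕜 k f 0) (m : ℕ) :
    iteratedDeriv k (fun y => f y * y ^ m) 0 = k.descFactorial m * iteratedDeriv (k - m) f 0 := by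
  rw [iteratedDeriv_fun_mul hf (by fun_prop : ContDiffAt 𝕜 k (fun y : 𝕜 => y ^ m) 0)]
  simp only [iteratedDeriv_fun_pow_zero, Nat.cast_ite, Nat.cast_zero, mul_ite, mul_zero]
  rcases le_or_gt m k with hmk | hkm
  · rw [sum_eq_single (k - m)]
    · rw [if_pos (by omega), Nat.descFactorial_eq_factorial_mul_choose, Nat.choose_symm hmk]
      push_cast
      ring
    · intro i hi hne
      rw [if_neg (by rw [Finset.mem_range] at hi; omega)]
    · simp
  · rw [Nat.descFactorial_eq_zero_iff_lt.mpr hkm, Nat.cast_zero, zero_mul]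
    exact sum_eq_zero fun i _ => if_neg (by omega)

variable {g d : 𝕜 → 𝕜} {x : 𝕜}

theorem iteratedDeriv_succ_comp {k : ℕ} (hg : ContDiffAt 𝕜 (k + 1) g (d x))
    (hd : ContDiffAt 𝕜 (k + 1) d x) :
    iteratedDeriv (k + 1) (g ∘ d) x = ∑ i ∈ range (k + 1),
      k.choose i * iteratedDeriv i (deriv g ∘ d) x * iteratedDeriv (k - i + 1) d x := by
  have hchain : deriv (g ∘ d) =ᶠ[𝓝 x] (deriv g ∘ d) * deriv d := by
    filter_upwards [hd.continuousAt.eventually (hg.eventually (by simp)), hd.eventually (by simp)]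
      with y hgy hdy
    exact deriv_comp y (hgy.differentiableAt (by simp)) (hdy.differentiableAt (by simp))
  rw [iteratedDeriv_succ', hchain.iteratedDeriv_eq,
    iteratedDeriv_mul ((hg.derivWithin le_rfl).comp x (hd.of_le (by simp))) (hd.derivWithin le_rfl)]
  simp only [← iteratedDeriv_succ']

theorem iteratedDeriv_two_comp (hg : ContDiffAt 𝕜 2 g (d x)) (hd : ContDiffAt 𝕜 2 d x) :
    iteratedDeriv 2 (g ∘ d) x =
      iteratedDeriv 2 g (d x) * deriv d x ^ 2 + deriv g (d x) * iteratedDeriv 2 d x := by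
  have hg' : DifferentiableAt 𝕜 (deriv g) (d x) :=
    (hg.derivWithin (m := 1) le_rfl).differentiableAt (by simp)
  rw [iteratedDeriv_succ_comp hg hd]
  simp only [Nat.reduceAdd, iteratedDeriv_succ, sum_range_succ, Finset.range_one, sum_singleton,
    Nat.choose_succ_self_right, zero_add, Nat.cast_one, iteratedDeriv_zero, Function.comp_apply,
    one_mul, tsub_zero, Nat.choose_self, deriv_comp x hg' (hd.differentiableAt (by simp)), tsub_self]
  ring

theorem iteratedDeriv_four_comp_of_deriv_eq_zero (hg : ContDiffAt 𝕜 4 g (d x))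
    (hd : ContDiffAt 𝕜 4 d x) (hd' : deriv d x = 0) :
    iteratedDeriv 4 (g ∘ d) x = deriv g (d x) * iteratedDeriv 4 d x +
      3 * iteratedDeriv 2 g (d x) * iteratedDeriv 2 d x ^ 2 := by
  have hg' : ContDiffAt 𝕜 2 (deriv g) (d x) := hg.derivWithin (by norm_num)
  rw [iteratedDeriv_succ_comp hg hd]
  simp only [Nat.reduceAdd, iteratedDeriv_succ, sum_range_succ, Finset.range_one, sum_singleton,
    Nat.choose_zero_right, Nat.cast_one, iteratedDeriv_zero, Function.comp_apply, one_mul,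
    tsub_zero, Nat.choose_one_right, Nat.cast_ofNat, hd', mul_zero, Nat.add_one_sub_one, zero_mul,
    add_zero, Nat.choose_succ_self_right, iteratedDeriv_two_comp hg' (hd.of_le (by norm_num)),
    deriv_comp x (hg'.differentiableAt (by simp)) (hd.differentiableAt (by simp)), ne_eq,
    OfNat.ofNat_ne_zero, not_false_eq_true, zero_pow, zero_add, Nat.reduceSub, Nat.choose_self,
    tsub_self, add_right_inj]
  ring

end IteratedDeriv

namespace DoublePointCurve

variable {𝕜 : Type*} [NontriviallyNormedField 𝕜] {g₀ g₁ c d : 𝕜 → 𝕜}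
  (hd0 : d 0 = 0) (hd : ContDiffAt 𝕜 4 d 0) (hg₀ : ContDiffAt 𝕜 4 g₀ (d 0))
  (hg₁ : ContDiffAt 𝕜 4 g₁ (d 0)) (hc : ContDiffAt 𝕜 4 c 0)
  (hE : (fun y => g₀ (d y) + g₁ (d y) * y ^ 2 + c y * y ^ 4) =ᶠ[𝓝 0] 0)
include hd hg₀ hg₁ hc hE

theorem iteratedDeriv_sum_eq_zero {k : ℕ} (hk : k ≤ 4) :
    iteratedDeriv k (g₀ ∘ d) 0 + k.descFactorial 2 * iteratedDeriv (k - 2) (g₁ ∘ d) 0 +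
      k.descFactorial 4 * iteratedDeriv (k - 4) c 0 = 0 := by
  have hk' : (k : WithTop ℕ∞) ≤ 4 := by exact_mod_cast hk
  have h₀ : ContDiffAt 𝕜 k (g₀ ∘ d) 0 := (hg₀.comp 0 hd).of_le hk'
  have h₁ : ContDiffAt 𝕜 k (g₁ ∘ d) 0 := (hg₁.comp 0 hd).of_le hk'
  have h₂ : ContDiffAt 𝕜 k c 0 := hc.of_le hk'
  have h := hE.iteratedDeriv_eq k
  change iteratedDeriv k (fun y => (g₀ ∘ d) y + (g₁ ∘ d) y * y ^ 2 + c y * y ^ 4) 0 = _ at h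
  rw [iteratedDeriv_fun_add (h₀.add (h₁.mul (by fun_prop))) (h₂.mul (by fun_prop)),
    iteratedDeriv_fun_add h₀ (h₁.mul (by fun_prop)), iteratedDeriv_mul_pow_zero h₁,
    iteratedDeriv_mul_pow_zero h₂] at h
  simpa [iteratedDeriv_const] using h

include hd0

theorem deriv_eq_zero (hg₀' : deriv g₀ 0 ≠ 0) : deriv d 0 = 0 := by
  have h := iteratedDeriv_sum_eq_zero hd hg₀ hg₁ hc hE (k := 1) (by norm_num)
  rw [iteratedDeriv_one, deriv_comp 0 (hg₀.differentiableAt (by simp))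
    (hd.differentiableAt (by simp)), hd0] at h
  exact (mul_eq_zero.mp (by simpa using h)).resolve_left hg₀'

theorem iteratedDeriv_two_eq (hg₀' : deriv g₀ 0 ≠ 0) :
    iteratedDeriv 2 d 0 = -2 * g₁ 0 / deriv g₀ 0 := by
  have h : deriv g₀ 0 * iteratedDeriv 2 d 0 + 2 * g₁ 0 = 0 := by
    simpa [iteratedDeriv_two_comp (hg₀.of_le (by norm_num)) (hd.of_le (by norm_num)),
      deriv_eq_zero hd0 hd hg₀ hg₁ hc hE hg₀', hd0] using
      iteratedDeriv_sum_eq_zero hd hg₀ hg₁ hc hE (k := 2) (by norm_num)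
  rw [eq_div_iff hg₀']
  linear_combination h

theorem iteratedDeriv_four_eq (hg₀' : deriv g₀ 0 ≠ 0) :
    iteratedDeriv 4 d 0 = -(12 / deriv g₀ 0 ^ 3) * (2 * c 0 * deriv g₀ 0 ^ 2 +
      g₁ 0 * (g₁ 0 * iteratedDeriv 2 g₀ 0 - 2 * deriv g₀ 0 * deriv g₁ 0)) := by
  have hd' := deriv_eq_zero hd0 hd hg₀ hg₁ hc hE hg₀'
  have h : deriv g₀ 0 * iteratedDeriv 4 d 0 + 3 * iteratedDeriv 2 g₀ 0 * iteratedDeriv 2 d 0 ^ 2 +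
      12 * (deriv g₁ 0 * iteratedDeriv 2 d 0) + 24 * c 0 = 0 := by
    simpa [iteratedDeriv_four_comp_of_deriv_eq_zero hg₀ hd hd',
      iteratedDeriv_two_comp (hg₁.of_le (by norm_num)) (hd.of_le (by norm_num)), hd', hd0] using
      iteratedDeriv_sum_eq_zero hd hg₀ hg₁ hc hE (k := 4) le_rfl
  rw [iteratedDeriv_two_eq hd0 hd hg₀ hg₁ hc hE hg₀'] at h
  field_simp at h ⊢
  linear_combination h

end DoublePointCurve

theorem stmt9_general (b₀ b₁ : ℝ → ℝ) (b₃ : ℝ → ℝ → ℝ)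
    (hb₀ : ContDiff ℝ (⊤ : ℕ∞) b₀)
    (hb₁ : ContDiff ℝ (⊤ : ℕ∞) b₁)
    (hb₃ : ContDiff ℝ (⊤ : ℕ∞) (Function.uncurry b₃))
    (hb₀0 : b₀ 0 = 0)
    (hb₀0' : deriv b₀ 0 ≠ 0) :
    (∃ ε > (0 : ℝ), ∃ d : ℝ → ℝ,
      ContDiffOn ℝ (⊤ : ℕ∞) d (Set.Ioo (-ε) ε) ∧ d 0 = 0 ∧
      ∀ y ∈ Set.Ioo (-ε) ε,
        b₀ (d y) + b₁ (d y) * y ^ 2 +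
          (1 / 2) * (b₃ (d y) y + b₃ (d y) (-y)) * y ^ 4 = 0) ∧
    (∀ ε : ℝ, 0 < ε → ∀ d : ℝ → ℝ,
      ContDiffOn ℝ (⊤ : ℕ∞) d (Set.Ioo (-ε) ε) → d 0 = 0 →
      (∀ y ∈ Set.Ioo (-ε) ε,
        b₀ (d y) + b₁ (d y) * y ^ 2 +
          (1 / 2) * (b₃ (d y) y + b₃ (d y) (-y)) * y ^ 4 = 0) →
      deriv d 0 = 0 ∧
      iteratedDeriv 2 d 0 = -2 * b₁ 0 / deriv b₀ 0 ∧
      iteratedDeriv 4 d 0 = -(12 / deriv b₀ 0 ^ 3) *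
        (2 * b₃ 0 0 * deriv b₀ 0 ^ 2 +
          b₁ 0 * (b₁ 0 * iteratedDeriv 2 b₀ 0 - 2 * deriv b₀ 0 * deriv b₁ 0))) := by
  refine ⟨?_, fun ε hε d hd hd0 heq => ?_⟩
  · let G : ℝ × ℝ → ℝ := fun p =>
      b₀ p.2 + b₁ p.2 * p.1 ^ 2 + (1 / 2) * (b₃ p.2 p.1 + b₃ p.2 (-p.1)) * p.1 ^ 4
    have hG : ContDiff ℝ (⊤ : ℕ∞) G := by
      have hplus := hb₃.comp (contDiff_snd.prodMk contDiff_fst)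
      have hminus := hb₃.comp (contDiff_snd.prodMk contDiff_fst.neg)
      exact ((hb₀.comp contDiff_snd).add ((hb₁.comp contDiff_snd).mul (contDiff_fst.pow 2))).add
        ((contDiff_const.mul (hplus.add hminus)).mul (contDiff_fst.pow 4))
    obtain ⟨ε, hε, d, hd, hd0, hdG⟩ :=
      hG.exists_contDiffOn_ball_implicitFunction (u := (0, 0)) (by simp) (by simpa [G] using hb₀0')
    refine ⟨ε, hε, d, by simpa [Real.ball_eq_Ioo] using hd, hd0, fun y hy => ?_⟩
    simpa [G, hb₀0] using hdG y (by simpa [Real.ball_eq_Ioo] using hy)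
  · have h4 : (4 : WithTop ℕ∞) ≤ (⊤ : ℕ∞) := by norm_cast
    have hU : Ioo (-ε) ε ∈ 𝓝 0 := Ioo_mem_nhds (by linarith) hε
    have hd4 : ContDiffAt ℝ 4 d 0 := (hd.contDiffAt hU).of_le h4
    have hc : ContDiffAt ℝ 4 (fun y => (1 / 2) * (b₃ (d y) y + b₃ (d y) (-y))) 0 := by
      have hb₃4 := hb₃.of_le h4
      exact contDiffAt_const.mul ((hb₃4.comp_contDiffAt 0 (hd4.prodMk contDiffAt_id)).add
        (hb₃4.comp_contDiffAt 0 (hd4.prodMk contDiffAt_id.neg)))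
    have hE : (fun y => b₀ (d y) + b₁ (d y) * y ^ 2 +
        (1 / 2) * (b₃ (d y) y + b₃ (d y) (-y)) * y ^ 4) =ᶠ[𝓝 0] 0 := by
      filter_upwards [hU] using heq
    have hb₀d : ContDiffAt ℝ 4 b₀ (d 0) := hb₀.contDiffAt.of_le h4
    have hb₁d : ContDiffAt ℝ 4 b₁ (d 0) := hb₁.contDiffAt.of_le h4
    refine ⟨DoublePointCurve.deriv_eq_zero hd0 hd4 hb₀d hb₁d hc hE hb₀0',
      DoublePointCurve.iteratedDeriv_two_eq hd0 hd4 hb₀d hb₁d hc hE hb₀0', ?_⟩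
    rw [DoublePointCurve.iteratedDeriv_four_eq hd0 hd4 hb₀d hb₁d hc hE hb₀0', hd0, neg_zero]
    ring

/-- If `b₀'(0) ≠ 0`, there exist `ε > 0` and a smooth `d : (−ε,ε) → ℝ`
with `d(0) = 0` and `b₀(d(y)) + b₁(d(y))y² + ½(b₃(d(y),y) + b₃(d(y),−y))y⁴ = 0` for
`|y| < ε` (parametrising the double point curve of the folded cuspidal edge), and any
such `d` satisfies `d'(0) = 0`, `d''(0) = −2b₁(0)/b₀'(0)` and
`d⁗(0) = −(12/b₀'(0)³)(2b₃(0,0)b₀'(0)² + b₁(0)(b₁(0)b₀''(0) − 2b₀'(0)b₁'(0)))`. -/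
theorem stmt9 (a b₀ b₁ b₂ : ℝ → ℝ) (b₃ : ℝ → ℝ → ℝ)
    (ha : ContDiff ℝ (⊤ : ℕ∞) a) (hb₀ : ContDiff ℝ (⊤ : ℕ∞) b₀)
    (hb₁ : ContDiff ℝ (⊤ : ℕ∞) b₁) (hb₂ : ContDiff ℝ (⊤ : ℕ∞) b₂)
    (hb₃ : ContDiff ℝ (⊤ : ℕ∞) (Function.uncurry b₃))
    (ha0 : a 0 = 0) (ha0' : deriv a 0 = 0) (hb₀0 : b₀ 0 = 0)
    (hb₀0' : deriv b₀ 0 ≠ 0) :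
    (∃ ε > (0 : ℝ), ∃ d : ℝ → ℝ,
      ContDiffOn ℝ (⊤ : ℕ∞) d (Set.Ioo (-ε) ε) ∧ d 0 = 0 ∧
      ∀ y ∈ Set.Ioo (-ε) ε,
        b₀ (d y) + b₁ (d y) * y ^ 2 +
          (1 / 2) * (b₃ (d y) y + b₃ (d y) (-y)) * y ^ 4 = 0) ∧
    (∀ ε : ℝ, 0 < ε → ∀ d : ℝ → ℝ,
      ContDiffOn ℝ (⊤ : ℕ∞) d (Set.Ioo (-ε) ε) → d 0 = 0 →
      (∀ y ∈ Set.Ioo (-ε) ε,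
        b₀ (d y) + b₁ (d y) * y ^ 2 +
          (1 / 2) * (b₃ (d y) y + b₃ (d y) (-y)) * y ^ 4 = 0) →
      deriv d 0 = 0 ∧
      iteratedDeriv 2 d 0 = -2 * b₁ 0 / deriv b₀ 0 ∧
      iteratedDeriv 4 d 0 = -(12 / deriv b₀ 0 ^ 3) *
        (2 * b₃ 0 0 * deriv b₀ 0 ^ 2 +
          b₁ 0 * (b₁ 0 * iteratedDeriv 2 b₀ 0 - 2 * deriv b₀ 0 * deriv b₁ 0))) :=
  stmt9_general b₀ b₁ b₃ hb₀ hb₁ hb₃ hb₀0 hb₀0'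
end

section
/- Let h(u,v,w) = w² − u²v³, whose zero set X is the image of the standard cuspidal cross-cap (x,y) ↦ (x, y², xy³), and let ξ₁ = (3u, −2v, 0), ξ₂ = (0, 2v, 3w), ξ₃ = (0, 2w, 3u²v²), ξ₄ = (w, 0, uv³) be vector fields on ℝ³. Then for every open neighbourhood U of 0 in ℝ³, every smooth vector field ξ : U → ℝ³ and every smooth function λ : U → ℝ with ⟨ξ(p), ∇h(p)⟩ = λ(p)·h(p) for all p ∈ U, there exist an open neighbourhood V ⊆ U of 0 and smooth functions c₁, c₂, c₃, c₄ : V → ℝ such that ξ = c₁ξ₁ + c₂ξ₂ + c₃ξ₃ + c₄ξ₄ on V. -/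
open Real Set

/-!
Write `ξ = (a, b, c)`. On the plane `w = 0` the tangency equation reads
`u v² (2 v a + 3 u b - u v λ) = 0`, and a continuous function killed by a power of a coordinate on
an open set vanishes there; so `2 v a + 3 u b = u v λ` on `w = 0`, and `a = 0` on the `v`-axis.
Hadamard's lemma (`f = f|_{x_i = 0} + x_i g`, where `g = ∫₀¹ ∂_i f(…, t x_i, …) dt` is smooth)
then gives `a = u A + w a₁`, `b = b|_{w=0} + w b₁`, `λ = λ|_{w=0} + w λ₁` with
`3 b|_{w=0} = v (λ|_{w=0} - 2 A)`. Substituted into the tangency equation this leaves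
`w (2 c - w λ - 2 u v³ a₁ - 3 u² v² b₁ + u² v³ λ₁) = 0`, and the coefficients are
`c₁ = A / 3 + w λ₁ / 6`, `c₂ = λ / 6`, `c₃ = b₁ / 2`, `c₄ = a₁ - u λ₁ / 2`.
A bump function reduces germs on a neighbourhood of `0` to globally smooth `ξ` and `λ`.
-/

open Function
open scoped ContDiff

section ParametricIntegral

variable {E F : Type*} [NormedAddCommGroup E] [NormedSpace ℝ E] [NormedAddCommGroup F]
  [NormedSpace ℝ F]

theorem ContDiff.continuous_fderiv_comp_inl {f : E × ℝ → F} (hf : ContDiff ℝ 1 f) :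
    Continuous fun q => fderiv ℝ f q ∘L ContinuousLinearMap.inl ℝ E ℝ :=
  ((ContinuousLinearMap.compL ℝ E (E × ℝ) F).flip (.inl ℝ E ℝ)).continuous.comp
    (hf.continuous_fderiv one_ne_zero)

theorem hasFDerivAt_intervalIntegral_of_contDiff [FiniteDimensional ℝ E] {f : E → ℝ → F}
    (hf : ContDiff ℝ 1 (uncurry f)) (a b : ℝ) (x₀ : E) :
    HasFDerivAt (fun x => ∫ t in a..b, f x t)
      (∫ t in a..b, fderiv ℝ (uncurry f) (x₀, t) ∘L ContinuousLinearMap.inl ℝ E ℝ) x₀ := by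
  have hf' := hf.continuous_fderiv_comp_inl
  have hcont : ∀ x, Continuous (f x) := fun x => hf.continuous.comp (.prodMk_right x)
  obtain ⟨C, hC⟩ := (isCompact_closedBall x₀ 1 |>.prod isCompact_uIcc).exists_bound_of_continuousOn
    hf'.continuousOn
  refine intervalIntegral.hasFDerivAt_integral_of_dominated_of_fderiv_le (𝕜 := ℝ)
    (F' := fun x t => fderiv ℝ (uncurry f) (x, t) ∘L .inl ℝ E ℝ) (bound := fun _ => C)
    (Metric.ball_mem_nhds x₀ one_pos)
    (.of_forall fun x => (hcont x).aestronglyMeasurable) ((hcont x₀).intervalIntegrable a b)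
    (hf'.comp (.prodMk_right x₀)).aestronglyMeasurable ?_ intervalIntegrable_const ?_
  · refine .of_forall fun t ht x hx => hC (x, t) ⟨Metric.ball_subset_closedBall hx, ?_⟩
    exact uIoc_subset_uIcc ht
  · refine .of_forall fun t _ x _ => ?_
    exact (hf.differentiable one_ne_zero (x, t)).hasFDerivAt.comp x
      (hasFDerivAt_prodMk_left (𝕜 := ℝ) x t)

theorem contDiff_intervalIntegral_of_contDiff [FiniteDimensional ℝ E] [CompleteSpace F]
    {n : ℕ∞} {f : E → ℝ → F} (hf : ContDiff ℝ n (uncurry f)) (a b : ℝ) :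
    ContDiff ℝ n fun x => ∫ t in a..b, f x t := by
  suffices h : ∀ m : ℕ, ∀ f : E → ℝ → F, ContDiff ℝ m (uncurry f) →
      ContDiff ℝ m fun x => ∫ t in a..b, f x t by
    cases n with
    | top => exact contDiff_infty.2 fun m => h m f (hf.of_le (by exact_mod_cast le_top))
    | coe m => exact h m f hf
  intro m
  induction m with
  | zero =>
    intro f hf
    exact contDiff_zero.2 (intervalIntegral.continuous_parametric_intervalIntegral_of_continuous'
      (contDiff_zero.1 hf) a b)
  | succ m ih =>
    intro f hf
    push_cast at hf ⊢
    have hf1 : ContDiff ℝ 1 (uncurry f) := hf.of_le (by simp)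
    have hderiv := hasFDerivAt_intervalIntegral_of_contDiff hf1 a b
    refine contDiff_succ_iff_fderiv_apply.2 ⟨fun x => (hderiv x).differentiableAt, by simp, ?_⟩
    intro y
    have hfy : ContDiff ℝ m fun q : E × ℝ => fderiv ℝ (uncurry f) q (y, 0) :=
      (hf.fderiv_right le_rfl).clm_apply contDiff_const
    convert ih (fun x t => fderiv ℝ (uncurry f) (x, t) (y, 0)) hfy using 1
    funext x
    rw [(hderiv x).fderiv, ContinuousLinearMap.intervalIntegral_apply]
    · rfl
    · exact (hf1.continuous_fderiv_comp_inl.comp (.prodMk_right x)).intervalIntegrable a b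

theorem exists_contDiff_eq_sub_smul_add_smul [FiniteDimensional ℝ E] [CompleteSpace F]
    {f : E → F} (hf : ContDiff ℝ ∞ f) {φ : E → ℝ} (hφ : ContDiff ℝ ∞ φ) (v : E) :
    ∃ g : E → F, ContDiff ℝ ∞ g ∧ ∀ x, f x = f (x - φ x • v) + φ x • g x := by
  set γ : E → ℝ → E := fun x t => x - φ x • v + t • φ x • v
  refine ⟨fun x => ∫ t in (0 : ℝ)..1, fderiv ℝ f (γ x t) v, ?_, fun x => ?_⟩
  · refine contDiff_intervalIntegral_of_contDiff ?_ 0 1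
    exact (hf.fderiv_right le_rfl).clm_apply contDiff_const |>.comp (by fun_prop)
  · have hγ : ∀ t, HasDerivAt (fun t => f (γ x t)) (φ x • fderiv ℝ f (γ x t) v) t := by
      intro t
      rw [← map_smul]
      exact (hf.differentiable (by simp) _).hasFDerivAt.comp_hasDerivAt t
        (((hasDerivAt_id t).smul_const (φ x • v)).const_add _ |>.congr_deriv (one_smul ℝ _))
    have hint : Continuous fun t => φ x • fderiv ℝ f (γ x t) v :=
      continuous_const.smul <| ((hf.continuous_fderiv (by simp)).comp
        (by fun_prop : Continuous (γ x))).clm_apply continuous_const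
    have hFTC := intervalIntegral.integral_eq_sub_of_hasDerivAt (fun t _ => hγ t)
      (hint.intervalIntegrable 0 1)
    simp only [intervalIntegral.integral_smul, γ, zero_smul, one_smul, add_zero,
      sub_add_cancel] at hFTC
    rw [hFTC, add_sub_cancel]

end ParametricIntegral

theorem ContDiffBump.contDiff_smul_of_contDiffOn {E F : Type*} [NormedAddCommGroup E]
    [NormedSpace ℝ E] [HasContDiffBump E] [NormedAddCommGroup F] [NormedSpace ℝ F] {x : E}
    (c : ContDiffBump x) {U : Set E} (hU : IsOpen U) (hcU : Metric.closedBall x c.rOut ⊆ U)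
    {n : ℕ∞} {f : E → F} (hf : ContDiffOn ℝ n f U) : ContDiff ℝ n fun p => c p • f p := by
  refine contDiff_iff_contDiffAt.2 fun p => ?_
  by_cases hp : p ∈ U
  · exact c.contDiffAt.smul (hf.contDiffAt (hU.mem_nhds hp))
  · have hp' : p ∉ tsupport c := c.tsupport_eq ▸ fun h => hp (hcU h)
    refine (contDiffAt_const (c := (0 : F))).congr_of_eventuallyEq ?_
    filter_upwards [notMem_tsupport_iff_eventuallyEq.1 hp'] with q hq
    simp [hq]

section Coordinates

variable {ι : Type*} [Fintype ι] [DecidableEq ι]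

@[fun_prop]
theorem contDiff_update_zero {n : WithTop ℕ∞} (i : ι) :
    ContDiff ℝ n fun p : ι → ℝ => update p i 0 := by
  refine contDiff_pi.2 fun j => ?_
  rcases eq_or_ne j i with rfl | hj
  · simpa using contDiff_const
  · simpa [hj] using contDiff_apply ℝ ℝ j

theorem update_zero_mem_ball_zero {r : ℝ} {p : ι → ℝ} (hp : p ∈ Metric.ball 0 r) (i : ι) :
    update p i 0 ∈ Metric.ball 0 r := by
  rw [mem_ball_zero_iff] at hp ⊢
  refine lt_of_le_of_lt ((pi_norm_le_iff_of_nonneg (norm_nonneg p)).2 fun j => ?_) hp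
  rcases eq_or_ne j i with rfl | hj
  · simp
  · simpa [hj] using norm_le_pi_norm p j

theorem exists_contDiff_eq_update_zero_add_mul {f : (ι → ℝ) → ℝ} (hf : ContDiff ℝ ∞ f)
    (i : ι) : ∃ g : (ι → ℝ) → ℝ, ContDiff ℝ ∞ g ∧ ∀ p, f p = f (update p i 0) + p i * g p := by
  obtain ⟨g, hg, hfg⟩ := exists_contDiff_eq_sub_smul_add_smul hf (φ := fun p => p i)
    (contDiff_apply ℝ ℝ i) (Pi.single i 1)
  refine ⟨g, hg, fun p => ?_⟩
  rw [hfg p, Pi.update_eq_sub_add_single, Pi.single_zero, add_zero, ← Pi.single_smul',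
    smul_eq_mul, mul_one]
  rfl

end Coordinates

theorem eqOn_zero_of_coord_pow_mul_eq_zero {ι : Type*} {B : Set (ι → ℝ)} (hB : IsOpen B)
    {F : (ι → ℝ) → ℝ} (hF : ContinuousOn F B) (i : ι) (n : ℕ)
    (h : ∀ p ∈ B, p i ^ n * F p = 0) : EqOn F 0 B := by
  have hdense : Dense {p : ι → ℝ | p i ≠ 0} :=
    (dense_compl_singleton 0).preimage (isOpenMap_eval i)
  refine EqOn.of_subset_closure (s := B ∩ {p | p i ≠ 0}) (fun p hp => ?_) hF continuousOn_const
    inter_subset_left (hdense.open_subset_closure_inter hB)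
  exact (mul_eq_zero.1 (h p hp.1)).resolve_left (pow_ne_zero n hp.2)

section CuspidalCrossCap

variable {B : Set (Fin 3 → ℝ)} {a b c l : (Fin 3 → ℝ) → ℝ}

theorem tangent_cuspidalCrossCap_slice_eq_zero (hB : IsOpen B)
    (hB₂ : ∀ p ∈ B, update p 2 0 ∈ B) (ha : Continuous a) (hb : Continuous b)
    (hl : Continuous l)
    (htan : ∀ p ∈ B, -2 * p 0 * p 1 ^ 3 * a p - 3 * p 0 ^ 2 * p 1 ^ 2 * b p + 2 * p 2 * c p
      = l p * (p 2 ^ 2 - p 0 ^ 2 * p 1 ^ 3)) (p : Fin 3 → ℝ) (hp : p ∈ B) :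
    2 * p 1 * a (update p 2 0) + 3 * p 0 * b (update p 2 0) - p 0 * p 1 * l (update p 2 0)
      = 0 := by
  set P : (Fin 3 → ℝ) → ℝ := fun p =>
    2 * p 1 * a (update p 2 0) + 3 * p 0 * b (update p 2 0) - p 0 * p 1 * l (update p 2 0)
  have hP : Continuous P := by fun_prop
  have h : ∀ p ∈ B, p 0 ^ 1 * (p 1 ^ 2 * P p) = 0 := by
    intro p hp
    have := htan _ (hB₂ p hp)
    simp only [update_self, ne_eq, Fin.reduceEq, not_false_eq_true, update_of_ne] at this
    linear_combination -this
  have h' := eqOn_zero_of_coord_pow_mul_eq_zero hB (by fun_prop : Continuous _).continuousOn 0 1 h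
  exact eqOn_zero_of_coord_pow_mul_eq_zero hB hP.continuousOn 1 2 h' hp

theorem exists_coeffs_of_tangent_cuspidalCrossCap_apply (hB : IsOpen B)
    (hB₀ : ∀ p ∈ B, update p 0 0 ∈ B) (hB₂ : ∀ p ∈ B, update p 2 0 ∈ B)
    (ha : ContDiff ℝ ∞ a) (hb : ContDiff ℝ ∞ b) (hc : Continuous c) (hl : ContDiff ℝ ∞ l)
    (htan : ∀ p ∈ B, -2 * p 0 * p 1 ^ 3 * a p - 3 * p 0 ^ 2 * p 1 ^ 2 * b p + 2 * p 2 * c p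
      = l p * (p 2 ^ 2 - p 0 ^ 2 * p 1 ^ 3)) :
    ∃ c₁ c₂ c₃ c₄ : (Fin 3 → ℝ) → ℝ,
      ContDiff ℝ ∞ c₁ ∧ ContDiff ℝ ∞ c₂ ∧ ContDiff ℝ ∞ c₃ ∧ ContDiff ℝ ∞ c₄ ∧ ∀ p ∈ B,
        a p = c₁ p * (3 * p 0) + c₄ p * p 2 ∧
        b p = c₁ p * (-2 * p 1) + c₂ p * (2 * p 1) + c₃ p * (2 * p 2) ∧
        c p = c₂ p * (3 * p 2) + c₃ p * (3 * p 0 ^ 2 * p 1 ^ 2) + c₄ p * (p 0 * p 1 ^ 3) := by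
  have hac := ha.continuous
  have hbc := hb.continuous
  have hlc := hl.continuous
  have hslice := tangent_cuspidalCrossCap_slice_eq_zero hB hB₂ hac hbc hlc htan
  have ha_axis : ∀ p ∈ B, a (update (update p 0 0) 2 0) = 0 := by
    refine eqOn_zero_of_coord_pow_mul_eq_zero (F := fun p => a (update (update p 0 0) 2 0)) hB
      (by fun_prop : Continuous _).continuousOn 1 1 fun p hp => ?_
    have := hslice _ (hB₀ p hp)
    simp only [update_self, ne_eq, Fin.reduceEq, not_false_eq_true, update_of_ne] at this
    linear_combination this / 2
  obtain ⟨A, hA, hA_eq⟩ := exists_contDiff_eq_update_zero_add_mul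
    (f := fun p => a (update p 2 0)) (ha.comp (by fun_prop)) 0
  obtain ⟨a₁, ha₁, ha₁_eq⟩ := exists_contDiff_eq_update_zero_add_mul ha 2
  obtain ⟨b₁, hb₁, hb₁_eq⟩ := exists_contDiff_eq_update_zero_add_mul hb 2
  obtain ⟨l₁, hl₁, hl₁_eq⟩ := exists_contDiff_eq_update_zero_add_mul hl 2
  have haA : ∀ p ∈ B, a (update p 2 0) = p 0 * A p := fun p hp => by
    simpa [ha_axis p hp] using hA_eq p
  have hR : ∀ p ∈ B, 3 * b (update p 2 0) + 2 * p 1 * A p - p 1 * l (update p 2 0) = 0 := by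
    refine eqOn_zero_of_coord_pow_mul_eq_zero hB (by fun_prop : Continuous _).continuousOn 0 1
      fun p hp => ?_
    linear_combination hslice p hp - 2 * p 1 * haA p hp
  have hT : ∀ p ∈ B, 2 * c p - (p 2 * l p + 2 * p 0 * p 1 ^ 3 * a₁ p
      + 3 * p 0 ^ 2 * p 1 ^ 2 * b₁ p - p 0 ^ 2 * p 1 ^ 3 * l₁ p) = 0 := by
    refine eqOn_zero_of_coord_pow_mul_eq_zero hB (by fun_prop : Continuous _).continuousOn 2 1
      fun p hp => ?_
    linear_combination htan p hp + 2 * p 0 * p 1 ^ 3 * (ha₁_eq p + haA p hp)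
      + 3 * p 0 ^ 2 * p 1 ^ 2 * hb₁_eq p - p 0 ^ 2 * p 1 ^ 3 * hl₁_eq p
      + p 0 ^ 2 * p 1 ^ 2 * hR p hp
  refine ⟨fun p => A p / 3 + p 2 * l₁ p / 6, fun p => l p / 6, fun p => b₁ p / 2,
    fun p => a₁ p - p 0 * l₁ p / 2, by fun_prop, by fun_prop, by fun_prop, by fun_prop,
    fun p hp => ⟨?_, ?_, ?_⟩⟩
  · linear_combination ha₁_eq p + haA p hp
  · linear_combination hb₁_eq p + hR p hp / 3 - p 1 / 3 * hl₁_eq p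
  · linear_combination hT p hp / 2

theorem exists_coeffs_of_tangent_cuspidalCrossCap (hB : IsOpen B)
    (hB₀ : ∀ p ∈ B, update p 0 0 ∈ B) (hB₂ : ∀ p ∈ B, update p 2 0 ∈ B)
    {ξ : (Fin 3 → ℝ) → Fin 3 → ℝ} (hξ : ContDiff ℝ ∞ ξ) (hl : ContDiff ℝ ∞ l)
    (htan : ∀ p ∈ B, dot3 (ξ p) ![-2 * p 0 * p 1 ^ 3, -3 * p 0 ^ 2 * p 1 ^ 2, 2 * p 2]
      = l p * (p 2 ^ 2 - p 0 ^ 2 * p 1 ^ 3)) :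
    ∃ c₁ c₂ c₃ c₄ : (Fin 3 → ℝ) → ℝ,
      ContDiff ℝ ∞ c₁ ∧ ContDiff ℝ ∞ c₂ ∧ ContDiff ℝ ∞ c₃ ∧ ContDiff ℝ ∞ c₄ ∧
      ∀ p ∈ B, ξ p = c₁ p • ![3 * p 0, -2 * p 1, 0] + c₂ p • ![0, 2 * p 1, 3 * p 2]
        + c₃ p • ![0, 2 * p 2, 3 * p 0 ^ 2 * p 1 ^ 2] + c₄ p • ![p 2, 0, p 0 * p 1 ^ 3] := by
  obtain ⟨c₁, c₂, c₃, c₄, h₁, h₂, h₃, h₄, hξ_eq⟩ :=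
    exists_coeffs_of_tangent_cuspidalCrossCap_apply (c := fun p => ξ p 2) hB hB₀ hB₂
      (contDiff_pi.1 hξ 0) (contDiff_pi.1 hξ 1) ((continuous_apply 2).comp hξ.continuous) hl
      fun p hp => by
        rw [← htan p hp, dot3]
        simp only [Matrix.cons_val_zero, Matrix.cons_val_one, Matrix.cons_val]
        ring
  refine ⟨c₁, c₂, c₃, c₄, h₁, h₂, h₃, h₄, fun p hp => ?_⟩
  obtain ⟨h0, h1, h2⟩ := hξ_eq p hp
  ext j
  fin_cases j <;> simp only [Fin.zero_eta, Fin.mk_one, Fin.reduceFinMk, Pi.add_apply,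
    Matrix.smul_cons, smul_eq_mul, Matrix.smul_empty, Matrix.add_cons, Matrix.empty_add_empty,
    Matrix.head_cons, Matrix.tail_cons, Matrix.cons_val_zero, Matrix.cons_val_one,
    Matrix.cons_val]
  · linear_combination h0
  · linear_combination h1
  · linear_combination h2

end CuspidalCrossCap

/-- Let `h(u,v,w) = w² − u²v³` (whose zero set is the image of the
standard cuspidal cross-cap) and let `ξ₁ = (3u, −2v, 0)`, `ξ₂ = (0, 2v, 3w)`,
`ξ₃ = (0, 2w, 3u²v²)`, `ξ₄ = (w, 0, uv³)`. Every smooth vector field `ξ` defined near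
`0` which is tangent to `X` (i.e. `⟨ξ, ∇h⟩ = λ·h` for some smooth `λ`) is, on some
neighbourhood of `0`, a combination `c₁ξ₁ + c₂ξ₂ + c₃ξ₃ + c₄ξ₄` with smooth
coefficients. -/
theorem stmt12
    (h : (Fin 3 → ℝ) → ℝ) (hh : ∀ p, h p = p 2 ^ 2 - p 0 ^ 2 * p 1 ^ 3)
    (gradh : (Fin 3 → ℝ) → Fin 3 → ℝ)
    (hgradh : ∀ p, gradh p = ![-2 * p 0 * p 1 ^ 3, -3 * p 0 ^ 2 * p 1 ^ 2, 2 * p 2])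
    (ξ₁ ξ₂ ξ₃ ξ₄ : (Fin 3 → ℝ) → Fin 3 → ℝ)
    (hξ₁ : ∀ p, ξ₁ p = ![3 * p 0, -2 * p 1, 0])
    (hξ₂ : ∀ p, ξ₂ p = ![0, 2 * p 1, 3 * p 2])
    (hξ₃ : ∀ p, ξ₃ p = ![0, 2 * p 2, 3 * p 0 ^ 2 * p 1 ^ 2])
    (hξ₄ : ∀ p, ξ₄ p = ![p 2, 0, p 0 * p 1 ^ 3]) :
    ∀ U : Set (Fin 3 → ℝ), IsOpen U → (0 : Fin 3 → ℝ) ∈ U →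
    ∀ ξ : (Fin 3 → ℝ) → Fin 3 → ℝ, ContDiffOn ℝ (⊤ : ℕ∞) ξ U →
    ∀ lam : (Fin 3 → ℝ) → ℝ, ContDiffOn ℝ (⊤ : ℕ∞) lam U →
    (∀ p ∈ U, dot3 (ξ p) (gradh p) = lam p * h p) →
    ∃ V : Set (Fin 3 → ℝ), IsOpen V ∧ (0 : Fin 3 → ℝ) ∈ V ∧ V ⊆ U ∧
    ∃ c₁ c₂ c₃ c₄ : (Fin 3 → ℝ) → ℝ,
      ContDiffOn ℝ (⊤ : ℕ∞) c₁ V ∧ ContDiffOn ℝ (⊤ : ℕ∞) c₂ V ∧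
      ContDiffOn ℝ (⊤ : ℕ∞) c₃ V ∧ ContDiffOn ℝ (⊤ : ℕ∞) c₄ V ∧
      ∀ p ∈ V, ξ p = c₁ p • ξ₁ p + c₂ p • ξ₂ p + c₃ p • ξ₃ p + c₄ p • ξ₄ p := by
  intro U hU hU0 ξ hξ lam hlam htan
  obtain ⟨ε, hε, hεU⟩ := Metric.isOpen_iff.1 hU 0 hU0
  let φ : ContDiffBump (0 : Fin 3 → ℝ) := ⟨ε / 4, ε / 2, by positivity, by linarith⟩
  have hφU : Metric.closedBall 0 φ.rOut ⊆ U :=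
    (Metric.closedBall_subset_ball (by change ε / 2 < ε; linarith)).trans hεU
  set V := Metric.ball (0 : Fin 3 → ℝ) (ε / 4)
  have hVU : V ⊆ U := (Metric.ball_subset_closedBall.trans
    (Metric.closedBall_subset_closedBall (by change ε / 4 ≤ ε / 2; linarith))).trans hφU
  have hφV : ∀ p ∈ V, φ p = 1 := fun p hp =>
    φ.one_of_mem_closedBall (Metric.ball_subset_closedBall hp)
  obtain ⟨c₁, c₂, c₃, c₄, h₁, h₂, h₃, h₄, hdecomp⟩ := exists_coeffs_of_tangent_cuspidalCrossCap
    Metric.isOpen_ball (fun p hp => update_zero_mem_ball_zero hp 0)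
    (fun p hp => update_zero_mem_ball_zero hp 2) (φ.contDiff_smul_of_contDiffOn hU hφU hξ)
    (φ.contDiff_smul_of_contDiffOn hU hφU hlam) fun p hp => by
      simpa [hφV p hp, hgradh, hh] using htan p (hVU hp)
  refine ⟨V, Metric.isOpen_ball, Metric.mem_ball_self (by positivity), hVU, c₁, c₂, c₃, c₄,
    h₁.contDiffOn, h₂.contDiffOn, h₃.contDiffOn, h₄.contDiffOn, fun p hp => ?_⟩
  simpa [hφV p hp, hξ₁, hξ₂, hξ₃, hξ₄] using hdecomp p hp
end
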